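/- arXiv:1310.3450 — 8 statements merged into one kernel-verified Lean document; each statement's English description precedes it below -/
import Mathlib

section
/- Let G be a crosspatch knight pseudotour on an m×n rectangular board, and let H be the set of red board edges (unit edges of the grid whose midpoint is the common midpoint of some cross in G). Then every grid vertex is incident to an even number of red board edges. -/
set_option maxHeartbeats 1000000

/-- A vector is a knight-move difference: (±1,±2) or (±2,±1). -/
def IsKnightDiff (d : ℤ × ℤ) : Prop :=
  (|d.1| = 1 ∧ |d.2| = 2) ∨ (|d.1| = 2 ∧ |d.2| = 1)
/-- Squares of the m×n board. -/
def OnBoard (m n : ℕ) (p : ℤ × ℤ) : Prop :=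
  1 ≤ p.1 ∧ p.1 ≤ (m : ℤ) ∧ 1 ≤ p.2 ∧ p.2 ≤ (n : ℤ)

/-- Grid vertices (corner points) of the m×n board. -/
def InGrid (m n : ℕ) (v : ℤ × ℤ) : Prop :=
  0 ≤ v.1 ∧ v.1 ≤ (m : ℤ) ∧ 0 ≤ v.2 ∧ v.2 ≤ (n : ℤ)

/-- A unit step in the grid. -/
def IsUnitStep (d : ℤ × ℤ) : Prop :=
  (|d.1| = 1 ∧ d.2 = 0) ∨ (d.1 = 0 ∧ |d.2| = 1)

/-- The board edge from grid vertex `v` to grid vertex `w` is red: its midpoint is the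
center of some cross of `G`.  Square `(i,j)` has center `(i-1/2, j-1/2)` in grid
coordinates, so the doubled midpoint of a move `{p,q}` is `p + q - (1,1)`, while the
doubled midpoint of the board edge `{v,w}` is `v + w`. -/
def Red (G : SimpleGraph (ℤ × ℤ)) (v w : ℤ × ℤ) : Prop :=
  ∃ p q r s : ℤ × ℤ, G.Adj p q ∧ G.Adj r s ∧ ({p, q} : Set (ℤ × ℤ)) ≠ {r, s} ∧
    p + q = r + s ∧ p + q = v + w + (1, 1)

namespace RedAux

open Classical in
/-- Indicator of a proposition, in `ZMod 2`. -/
noncomputable def ind (P : Prop) : ZMod 2 := if P then 1 else 0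

lemma ind_congr {P Q : Prop} (h : P ↔ Q) : ind P = ind Q := by
  by_cases hP : P
  · rw [ind, ind, if_pos hP, if_pos (h.mp hP)]
  · rw [ind, ind, if_neg hP, if_neg (fun hQ => hP (h.mpr hQ))]

lemma ind_false {P : Prop} (h : ¬ P) : ind P = 0 := by
  rw [ind, if_neg h]

lemma ite_ind (P : Prop) {inst : Decidable P} :
    (if P then (1 : ZMod 2) else 0) = ind P := by
  by_cases h : P <;> simp [ind, h]

variable {m n : ℕ} {G : SimpleGraph (ℤ × ℤ)}

/-- The mod-2 count of the four "red edge" witnesses at grid vertex `(a,b)`: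
right, left, up, down. -/
noncomputable def gf (G : SimpleGraph (ℤ × ℤ)) (a b : ℤ) : ZMod 2 :=
  ind (G.Adj (a, b) (a+2, b+1)) + ind (G.Adj (a-1, b) (a+1, b+1)) +
  ind (G.Adj (a, b) (a+1, b+2)) + ind (G.Adj (a, b-1) (a+1, b+1))

section

variable (hm : ∀ p q, G.Adj p q → OnBoard m n p ∧ OnBoard m n q ∧ IsKnightDiff (p - q))
variable (hcross : ∀ p q, G.Adj p q → ∃ r s, G.Adj r s ∧
      ({p, q} : Set (ℤ × ℤ)) ≠ {r, s} ∧ p + q = r + s)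

include hm in
lemma bridge (hdeg : ∀ p, OnBoard m n p → (G.neighborSet p).ncard = 2) (x y : ℤ) :
    ind (G.Adj (x,y) (x+2,y+1)) + ind (G.Adj (x,y) (x+1,y+2)) +
    ind (G.Adj (x,y) (x-2,y+1)) + ind (G.Adj (x,y) (x-1,y+2)) +
    ind (G.Adj (x,y) (x+2,y-1)) + ind (G.Adj (x,y) (x+1,y-2)) +
    ind (G.Adj (x,y) (x-2,y-1)) + ind (G.Adj (x,y) (x-1,y-2)) = 0 := by
  classical
  by_cases hp : OnBoard m n (x, y)
  · have hne1 : ((x+2,y+1) : ℤ×ℤ) ∉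
        ({(x+1,y+2),(x-2,y+1),(x-1,y+2),(x+2,y-1),(x+1,y-2),(x-2,y-1),(x-1,y-2)} :
          Finset (ℤ×ℤ)) := by
      simp only [Finset.mem_insert, Finset.mem_singleton, Prod.mk.injEq]
      rintro (⟨h1,h2⟩|⟨h1,h2⟩|⟨h1,h2⟩|⟨h1,h2⟩|⟨h1,h2⟩|⟨h1,h2⟩|⟨h1,h2⟩) <;> omega
    have hne2 : ((x+1,y+2) : ℤ×ℤ) ∉
        ({(x-2,y+1),(x-1,y+2),(x+2,y-1),(x+1,y-2),(x-2,y-1),(x-1,y-2)} : Finset (ℤ×ℤ)) := by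
      simp only [Finset.mem_insert, Finset.mem_singleton, Prod.mk.injEq]
      rintro (⟨h1,h2⟩|⟨h1,h2⟩|⟨h1,h2⟩|⟨h1,h2⟩|⟨h1,h2⟩|⟨h1,h2⟩) <;> omega
    have hne3 : ((x-2,y+1) : ℤ×ℤ) ∉
        ({(x-1,y+2),(x+2,y-1),(x+1,y-2),(x-2,y-1),(x-1,y-2)} : Finset (ℤ×ℤ)) := by
      simp only [Finset.mem_insert, Finset.mem_singleton, Prod.mk.injEq]
      rintro (⟨h1,h2⟩|⟨h1,h2⟩|⟨h1,h2⟩|⟨h1,h2⟩|⟨h1,h2⟩) <;> omega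
    have hne4 : ((x-1,y+2) : ℤ×ℤ) ∉
        ({(x+2,y-1),(x+1,y-2),(x-2,y-1),(x-1,y-2)} : Finset (ℤ×ℤ)) := by
      simp only [Finset.mem_insert, Finset.mem_singleton, Prod.mk.injEq]
      rintro (⟨h1,h2⟩|⟨h1,h2⟩|⟨h1,h2⟩|⟨h1,h2⟩) <;> omega
    have hne5 : ((x+2,y-1) : ℤ×ℤ) ∉ ({(x+1,y-2),(x-2,y-1),(x-1,y-2)} : Finset (ℤ×ℤ)) := by
      simp only [Finset.mem_insert, Finset.mem_singleton, Prod.mk.injEq]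
      rintro (⟨h1,h2⟩|⟨h1,h2⟩|⟨h1,h2⟩) <;> omega
    have hne6 : ((x+1,y-2) : ℤ×ℤ) ∉ ({(x-2,y-1),(x-1,y-2)} : Finset (ℤ×ℤ)) := by
      simp only [Finset.mem_insert, Finset.mem_singleton, Prod.mk.injEq]
      rintro (⟨h1,h2⟩|⟨h1,h2⟩) <;> omega
    have hne7 : ((x-2,y-1) : ℤ×ℤ) ∉ ({(x-1,y-2)} : Finset (ℤ×ℤ)) := by
      simp only [Finset.mem_singleton, Prod.mk.injEq]
      rintro ⟨h1,h2⟩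
      omega
    have hset : G.neighborSet (x, y) =
        ↑((({(x+2,y+1),(x+1,y+2),(x-2,y+1),(x-1,y+2),(x+2,y-1),(x+1,y-2),(x-2,y-1),(x-1,y-2)} :
          Finset (ℤ × ℤ))).filter (fun q => G.Adj (x,y) q)) := by
      ext ⟨q1, q2⟩
      simp only [SimpleGraph.mem_neighborSet, Finset.mem_coe, Finset.mem_filter,
        Finset.mem_insert, Finset.mem_singleton, Prod.mk.injEq]
      constructor
      · intro h
        refine ⟨?_, h⟩
        obtain ⟨-, -, hkd⟩ := hm _ _ h
        rw [Prod.mk_sub_mk] at hkd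
        have hkd' : (|x - q1| = 1 ∧ |y - q2| = 2) ∨ (|x - q1| = 2 ∧ |y - q2| = 1) := hkd
        simp only [Int.abs_eq_natAbs] at hkd'
        rcases hkd' with ⟨h1, h2⟩ | ⟨h1, h2⟩
        · have hx : x - q1 = 1 ∨ x - q1 = -1 := by omega
          have hy : y - q2 = 2 ∨ y - q2 = -2 := by omega
          rcases hx with hx | hx <;> rcases hy with hy | hy
          · exact Or.inr (Or.inr (Or.inr (Or.inr (Or.inr (Or.inr (Or.inr
              ⟨by omega, by omega⟩))))))
          · exact Or.inr (Or.inr (Or.inr (Or.inl ⟨by omega, by omega⟩)))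
          · exact Or.inr (Or.inr (Or.inr (Or.inr (Or.inr (Or.inl ⟨by omega, by omega⟩)))))
          · exact Or.inr (Or.inl ⟨by omega, by omega⟩)
        · have hx : x - q1 = 2 ∨ x - q1 = -2 := by omega
          have hy : y - q2 = 1 ∨ y - q2 = -1 := by omega
          rcases hx with hx | hx <;> rcases hy with hy | hy
          · exact Or.inr (Or.inr (Or.inr (Or.inr (Or.inr (Or.inr (Or.inl
              ⟨by omega, by omega⟩))))))
          · exact Or.inr (Or.inr (Or.inl ⟨by omega, by omega⟩))
          · exact Or.inr (Or.inr (Or.inr (Or.inr (Or.inl ⟨by omega, by omega⟩))))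
          · exact Or.inl ⟨by omega, by omega⟩
      · exact fun h => h.2
    have hcard := hdeg _ hp
    rw [hset, Set.ncard_coe_finset] at hcard
    have hsum := Finset.natCast_card_filter (R := ZMod 2) (fun q => G.Adj (x,y) q)
      (({(x+2,y+1),(x+1,y+2),(x-2,y+1),(x-1,y+2),(x+2,y-1),(x+1,y-2),(x-2,y-1),(x-1,y-2)} :
        Finset (ℤ × ℤ)))
    rw [hcard] at hsum
    rw [Finset.sum_insert hne1, Finset.sum_insert hne2, Finset.sum_insert hne3,
      Finset.sum_insert hne4, Finset.sum_insert hne5, Finset.sum_insert hne6,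
      Finset.sum_insert hne7, Finset.sum_singleton] at hsum
    simp only [ite_ind] at hsum
    have h2 : ((2 : ℕ) : ZMod 2) = 0 := by decide
    rw [h2] at hsum
    linear_combination -hsum
  · have h0 : ∀ q, ¬ G.Adj (x, y) q := fun q ha => hp (hm _ _ ha).1
    rw [ind_false (h0 _), ind_false (h0 _), ind_false (h0 _), ind_false (h0 _),
      ind_false (h0 _), ind_false (h0 _), ind_false (h0 _), ind_false (h0 _)]
    decide

include hm in
lemma classify_h (a b : ℤ) {r s : ℤ × ℤ} (hadj : G.Adj r s)
    (hsum : r + s = (2*a+2, 2*b+1)) :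
    ({r, s} : Set (ℤ × ℤ)) = {(a,b), (a+2,b+1)} ∨
    ({r, s} : Set (ℤ × ℤ)) = {(a,b+1), (a+2,b)} := by
  obtain ⟨r1, r2⟩ := r
  obtain ⟨s1, s2⟩ := s
  obtain ⟨-, -, hkd⟩ := hm _ _ hadj
  rw [Prod.mk_sub_mk] at hkd
  have hkd' : (|r1 - s1| = 1 ∧ |r2 - s2| = 2) ∨ (|r1 - s1| = 2 ∧ |r2 - s2| = 1) := hkd
  simp only [Int.abs_eq_natAbs] at hkd'
  rw [Prod.mk_add_mk, Prod.mk.injEq] at hsum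
  obtain ⟨hs1, hs2⟩ := hsum
  have hd1 : r1 - s1 = 2 ∨ r1 - s1 = -2 := by
    rcases hkd' with ⟨h1, h2⟩ | ⟨h1, h2⟩ <;> omega
  have hd2 : r2 - s2 = 1 ∨ r2 - s2 = -1 := by
    rcases hkd' with ⟨h1, h2⟩ | ⟨h1, h2⟩ <;> omega
  rcases hd1 with hd1 | hd1 <;> rcases hd2 with hd2 | hd2
  · have e1 : r1 = a+2 := by omega
    have e2 : r2 = b+1 := by omega
    have e3 : s1 = a := by omega
    have e4 : s2 = b := by omega
    subst e1; subst e2; subst e3; subst e4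
    exact Or.inl (Set.pair_comm _ _)
  · have e1 : r1 = a+2 := by omega
    have e2 : r2 = b := by omega
    have e3 : s1 = a := by omega
    have e4 : s2 = b+1 := by omega
    subst e1; subst e2; subst e3; subst e4
    exact Or.inr (Set.pair_comm _ _)
  · have e1 : r1 = a := by omega
    have e2 : r2 = b+1 := by omega
    have e3 : s1 = a+2 := by omega
    have e4 : s2 = b := by omega
    subst e1; subst e2; subst e3; subst e4
    exact Or.inr rfl
  · have e1 : r1 = a := by omega
    have e2 : r2 = b := by omega
    have e3 : s1 = a+2 := by omega
    have e4 : s2 = b+1 := by omega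
    subst e1; subst e2; subst e3; subst e4
    exact Or.inl rfl

include hm in
lemma classify_v (a b : ℤ) {r s : ℤ × ℤ} (hadj : G.Adj r s)
    (hsum : r + s = (2*a+1, 2*b+2)) :
    ({r, s} : Set (ℤ × ℤ)) = {(a,b), (a+1,b+2)} ∨
    ({r, s} : Set (ℤ × ℤ)) = {(a+1,b), (a,b+2)} := by
  obtain ⟨r1, r2⟩ := r
  obtain ⟨s1, s2⟩ := s
  obtain ⟨-, -, hkd⟩ := hm _ _ hadj
  rw [Prod.mk_sub_mk] at hkd
  have hkd' : (|r1 - s1| = 1 ∧ |r2 - s2| = 2) ∨ (|r1 - s1| = 2 ∧ |r2 - s2| = 1) := hkd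
  simp only [Int.abs_eq_natAbs] at hkd'
  rw [Prod.mk_add_mk, Prod.mk.injEq] at hsum
  obtain ⟨hs1, hs2⟩ := hsum
  have hd1 : r1 - s1 = 1 ∨ r1 - s1 = -1 := by
    rcases hkd' with ⟨h1, h2⟩ | ⟨h1, h2⟩ <;> omega
  have hd2 : r2 - s2 = 2 ∨ r2 - s2 = -2 := by
    rcases hkd' with ⟨h1, h2⟩ | ⟨h1, h2⟩ <;> omega
  rcases hd1 with hd1 | hd1 <;> rcases hd2 with hd2 | hd2
  · have e1 : r1 = a+1 := by omega
    have e2 : r2 = b+2 := by omega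
    have e3 : s1 = a := by omega
    have e4 : s2 = b := by omega
    subst e1; subst e2; subst e3; subst e4
    exact Or.inl (Set.pair_comm _ _)
  · have e1 : r1 = a+1 := by omega
    have e2 : r2 = b := by omega
    have e3 : s1 = a := by omega
    have e4 : s2 = b+2 := by omega
    subst e1; subst e2; subst e3; subst e4
    exact Or.inr rfl
  · have e1 : r1 = a := by omega
    have e2 : r2 = b+2 := by omega
    have e3 : s1 = a+1 := by omega
    have e4 : s2 = b := by omega
    subst e1; subst e2; subst e3; subst e4
    exact Or.inr (Set.pair_comm _ _)
  · have e1 : r1 = a := by omega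
    have e2 : r2 = b := by omega
    have e3 : s1 = a+1 := by omega
    have e4 : s2 = b+2 := by omega
    subst e1; subst e2; subst e3; subst e4
    exact Or.inl rfl

lemma adj_of_pair {r s x y : ℤ × ℤ} (hrs : G.Adj r s)
    (h : ({r, s} : Set (ℤ × ℤ)) = {x, y}) : G.Adj x y := by
  rcases Set.pair_eq_pair_iff.mp h with ⟨h1, h2⟩ | ⟨h1, h2⟩
  · subst h1; subst h2; exact hrs
  · subst h1; subst h2; exact hrs.symm

include hm hcross in
lemma pair_h (a b : ℤ) :
    G.Adj (a, b) (a+2, b+1) ↔ G.Adj (a, b+1) (a+2, b) := by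
  constructor
  · intro h
    obtain ⟨r, s, hrs, hne, hsum⟩ := hcross _ _ h
    have hsum' : r + s = (2*a+2, 2*b+1) := by
      rw [← hsum, Prod.mk_add_mk, Prod.mk.injEq]
      constructor <;> ring
    rcases classify_h hm a b hrs hsum' with hc | hc
    · exact absurd hc.symm hne
    · exact adj_of_pair hrs hc
  · intro h
    obtain ⟨r, s, hrs, hne, hsum⟩ := hcross _ _ h
    have hsum' : r + s = (2*a+2, 2*b+1) := by
      rw [← hsum, Prod.mk_add_mk, Prod.mk.injEq]
      constructor <;> ring
    rcases classify_h hm a b hrs hsum' with hc | hc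
    · exact adj_of_pair hrs hc
    · exact absurd hc.symm hne

include hm hcross in
lemma pair_v (a b : ℤ) :
    G.Adj (a, b) (a+1, b+2) ↔ G.Adj (a+1, b) (a, b+2) := by
  constructor
  · intro h
    obtain ⟨r, s, hrs, hne, hsum⟩ := hcross _ _ h
    have hsum' : r + s = (2*a+1, 2*b+2) := by
      rw [← hsum, Prod.mk_add_mk, Prod.mk.injEq]
      constructor <;> ring
    rcases classify_v hm a b hrs hsum' with hc | hc
    · exact absurd hc.symm hne
    · exact adj_of_pair hrs hc
  · intro h
    obtain ⟨r, s, hrs, hne, hsum⟩ := hcross _ _ h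
    have hsum' : r + s = (2*a+1, 2*b+2) := by
      rw [← hsum, Prod.mk_add_mk, Prod.mk.injEq]
      constructor <;> ring
    rcases classify_v hm a b hrs hsum' with hc | hc
    · exact adj_of_pair hrs hc
    · exact absurd hc.symm hne

lemma gf_shift_a (a b : ℤ) : gf G (a-1) b =
    ind (G.Adj (a-1, b) (a+1, b+1)) + ind (G.Adj (a-2, b) (a, b+1)) +
    ind (G.Adj (a-1, b) (a, b+2)) + ind (G.Adj (a-1, b-1) (a, b+1)) := by
  unfold gf
  rw [show (a-1 : ℤ)+2 = a+1 by ring, show (a-1 : ℤ)+1 = a by ring,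
    show (a-1 : ℤ)-1 = a-2 by ring]

lemma gf_shift_b (a b : ℤ) : gf G a (b-1) =
    ind (G.Adj (a, b-1) (a+2, b)) + ind (G.Adj (a-1, b-1) (a+1, b)) +
    ind (G.Adj (a, b-1) (a+1, b+1)) + ind (G.Adj (a, b-2) (a+1, b)) := by
  unfold gf
  rw [show (b-1 : ℤ)+2 = b+1 by ring, show (b-1 : ℤ)+1 = b by ring,
    show (b-1 : ℤ)-1 = b-2 by ring]

lemma gf_shift_ab (a b : ℤ) : gf G (a-1) (b-1) =
    ind (G.Adj (a-1, b-1) (a+1, b)) + ind (G.Adj (a-2, b-1) (a, b)) +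
    ind (G.Adj (a-1, b-1) (a, b+1)) + ind (G.Adj (a-1, b-2) (a, b)) := by
  unfold gf
  rw [show (a-1 : ℤ)+2 = a+1 by ring, show (a-1 : ℤ)+1 = a by ring,
    show (a-1 : ℤ)-1 = a-2 by ring, show (b-1 : ℤ)+2 = b+1 by ring,
    show (b-1 : ℤ)+1 = b by ring, show (b-1 : ℤ)-1 = b-2 by ring]

include hm hcross in
lemma cell (hdeg : ∀ p, OnBoard m n p → (G.neighborSet p).ncard = 2) (a b : ℤ) :
    gf G a b + gf G (a-1) b + gf G a (b-1) + gf G (a-1) (b-1) = 0 := by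
  have htwo : (2 : ZMod 2) = 0 := by decide
  have hb := bridge hm hdeg a b
  have e1 : ind (G.Adj (a-2, b) (a, b+1)) = ind (G.Adj (a, b) (a-2, b+1)) := by
    have h := pair_h hm hcross (a-2) b
    rw [show (a-2 : ℤ)+2 = a by ring] at h
    exact ind_congr (h.trans (G.adj_comm _ _))
  have e2 : ind (G.Adj (a-1, b) (a, b+2)) = ind (G.Adj (a, b) (a-1, b+2)) := by
    have h := pair_v hm hcross (a-1) b
    rw [show (a-1 : ℤ)+1 = a by ring] at h
    exact ind_congr h
  have e3 : ind (G.Adj (a, b-1) (a+2, b)) = ind (G.Adj (a, b) (a+2, b-1)) := by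
    have h := pair_h hm hcross a (b-1)
    rw [show (b-1 : ℤ)+1 = b by ring] at h
    exact ind_congr h
  have e4 : ind (G.Adj (a, b-2) (a+1, b)) = ind (G.Adj (a, b) (a+1, b-2)) := by
    have h := pair_v hm hcross a (b-2)
    rw [show (b-2 : ℤ)+2 = b by ring] at h
    exact ind_congr (h.trans (G.adj_comm _ _))
  have e5 : ind (G.Adj (a-2, b-1) (a, b)) = ind (G.Adj (a, b) (a-2, b-1)) :=
    ind_congr (G.adj_comm _ _)
  have e6 : ind (G.Adj (a-1, b-2) (a, b)) = ind (G.Adj (a, b) (a-1, b-2)) :=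
    ind_congr (G.adj_comm _ _)
  rw [gf_shift_a, gf_shift_b, gf_shift_ab]
  unfold gf
  linear_combination hb + e1 + e2 + e3 + e4 + e5 + e6 +
    (ind (G.Adj (a-1, b) (a+1, b+1)) + ind (G.Adj (a, b-1) (a+1, b+1)) +
     ind (G.Adj (a-1, b-1) (a+1, b)) + ind (G.Adj (a-1, b-1) (a, b+1))) * htwo

include hm in
lemma gf_zero_out (a b : ℤ)
    (h : a ≤ -1 ∨ (m : ℤ) + 1 ≤ a ∨ b ≤ -1 ∨ (n : ℤ) + 1 ≤ b) : gf G a b = 0 := by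
  have h1 : ind (G.Adj (a, b) (a+2, b+1)) = 0 := ind_false (fun ha => by
    obtain ⟨o1, o2, -⟩ := hm _ _ ha
    have o1' : 1 ≤ a ∧ a ≤ (m:ℤ) ∧ 1 ≤ b ∧ b ≤ (n:ℤ) := o1
    have o2' : 1 ≤ a+2 ∧ a+2 ≤ (m:ℤ) ∧ 1 ≤ b+1 ∧ b+1 ≤ (n:ℤ) := o2
    omega)
  have h2 : ind (G.Adj (a-1, b) (a+1, b+1)) = 0 := ind_false (fun ha => by
    obtain ⟨o1, o2, -⟩ := hm _ _ ha
    have o1' : 1 ≤ a-1 ∧ a-1 ≤ (m:ℤ) ∧ 1 ≤ b ∧ b ≤ (n:ℤ) := o1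
    have o2' : 1 ≤ a+1 ∧ a+1 ≤ (m:ℤ) ∧ 1 ≤ b+1 ∧ b+1 ≤ (n:ℤ) := o2
    omega)
  have h3 : ind (G.Adj (a, b) (a+1, b+2)) = 0 := ind_false (fun ha => by
    obtain ⟨o1, o2, -⟩ := hm _ _ ha
    have o1' : 1 ≤ a ∧ a ≤ (m:ℤ) ∧ 1 ≤ b ∧ b ≤ (n:ℤ) := o1
    have o2' : 1 ≤ a+1 ∧ a+1 ≤ (m:ℤ) ∧ 1 ≤ b+2 ∧ b+2 ≤ (n:ℤ) := o2
    omega)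
  have h4 : ind (G.Adj (a, b-1) (a+1, b+1)) = 0 := ind_false (fun ha => by
    obtain ⟨o1, o2, -⟩ := hm _ _ ha
    have o1' : 1 ≤ a ∧ a ≤ (m:ℤ) ∧ 1 ≤ b-1 ∧ b-1 ≤ (n:ℤ) := o1
    have o2' : 1 ≤ a+1 ∧ a+1 ≤ (m:ℤ) ∧ 1 ≤ b+1 ∧ b+1 ≤ (n:ℤ) := o2
    omega)
  unfold gf
  rw [h1, h2, h3, h4]
  decide

include hm hcross in
lemma row_eq (hdeg : ∀ p, OnBoard m n p → (G.neighborSet p).ncard = 2) (a b : ℤ) :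
    gf G a b + gf G (a-1) b = gf G a (b-1) + gf G (a-1) (b-1) := by
  have htwo : (2 : ZMod 2) = 0 := by decide
  have h := cell hm hcross hdeg a b
  linear_combination h - (gf G a (b-1) + gf G (a-1) (b-1)) * htwo

include hm hcross in
lemma row_zero (hdeg : ∀ p, OnBoard m n p → (G.neighborSet p).ncard = 2) (a b : ℤ) :
    gf G a b + gf G (a-1) b = 0 := by
  have key : ∀ k : ℕ, gf G a b + gf G (a-1) b = gf G a (b - k) + gf G (a-1) (b - k) := by
    intro k
    induction k with
    | zero => simp
    | succ k ih =>
      have step := row_eq hm hcross hdeg a (b - k)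
      rw [show ((b : ℤ) - ((k : ℕ) + 1 : ℕ)) = b - (k : ℕ) - 1 by push_cast; ring]
      rw [← step]
      exact ih
  rw [key (b + 1).toNat]
  have hb1 : (b : ℤ) - ((b + 1).toNat : ℤ) ≤ -1 := by omega
  rw [gf_zero_out hm _ _ (Or.inr (Or.inr (Or.inl hb1))),
    gf_zero_out hm _ _ (Or.inr (Or.inr (Or.inl hb1)))]
  decide

include hm hcross in
lemma col_eq (hdeg : ∀ p, OnBoard m n p → (G.neighborSet p).ncard = 2) (a b : ℤ) :
    gf G a b = gf G (a-1) b := by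
  have htwo : (2 : ZMod 2) = 0 := by decide
  have h := row_zero hm hcross hdeg a b
  linear_combination h - gf G (a-1) b * htwo

include hm hcross in
lemma gf_eq_zero (hdeg : ∀ p, OnBoard m n p → (G.neighborSet p).ncard = 2) (a b : ℤ) :
    gf G a b = 0 := by
  have key : ∀ k : ℕ, gf G a b = gf G (a - k) b := by
    intro k
    induction k with
    | zero => simp
    | succ k ih =>
      rw [show ((a : ℤ) - ((k : ℕ) + 1 : ℕ)) = a - (k : ℕ) - 1 by push_cast; ring]
      rw [← col_eq hm hcross hdeg (a - (k : ℕ)) b]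
      exact ih
  rw [key (a + 1).toNat]
  exact gf_zero_out hm _ _ (Or.inl (by omega))

include hm hcross in
lemma red_right (a b : ℤ) : Red G (a, b) (a+1, b) ↔ G.Adj (a, b) (a+2, b+1) := by
  constructor
  · rintro ⟨p, q, r, s, hpq, hrs, hne, hsum1, hsum2⟩
    have hsum' : p + q = (2*a+2, 2*b+1) := by
      rw [hsum2]
      simp only [Prod.mk_add_mk, Prod.mk.injEq]
      constructor <;> ring
    rcases classify_h hm a b hpq hsum' with hc | hc
    · exact adj_of_pair hpq hc
    · exact (pair_h hm hcross a b).2 (adj_of_pair hpq hc)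
  · intro h
    refine ⟨(a,b), (a+2,b+1), (a,b+1), (a+2,b), h, (pair_h hm hcross a b).1 h, ?_, ?_, ?_⟩
    · intro hEq
      rcases Set.pair_eq_pair_iff.mp hEq with ⟨h1, -⟩ | ⟨h1, -⟩ <;>
        (rw [Prod.mk.injEq] at h1; omega)
    · simp only [Prod.mk_add_mk, Prod.mk.injEq]
      exact ⟨trivial, by ring⟩
    · simp only [Prod.mk_add_mk, Prod.mk.injEq]
      constructor <;> ring

include hm hcross in
lemma red_left (a b : ℤ) : Red G (a, b) (a-1, b) ↔ G.Adj (a-1, b) (a+1, b+1) := by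
  have hp := pair_h hm hcross (a-1) b
  rw [show (a-1 : ℤ)+2 = a+1 by ring] at hp
  constructor
  · rintro ⟨p, q, r, s, hpq, hrs, hne, hsum1, hsum2⟩
    have hsum' : p + q = (2*(a-1)+2, 2*b+1) := by
      rw [hsum2]
      simp only [Prod.mk_add_mk, Prod.mk.injEq]
      constructor <;> ring
    have hcl := classify_h hm (a-1) b hpq hsum'
    rw [show (a-1 : ℤ)+2 = a+1 by ring] at hcl
    rcases hcl with hc | hc
    · exact adj_of_pair hpq hc
    · exact hp.2 (adj_of_pair hpq hc)
  · intro h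
    refine ⟨(a-1,b), (a+1,b+1), (a-1,b+1), (a+1,b), h, hp.1 h, ?_, ?_, ?_⟩
    · intro hEq
      rcases Set.pair_eq_pair_iff.mp hEq with ⟨h1, -⟩ | ⟨h1, -⟩ <;>
        (rw [Prod.mk.injEq] at h1; omega)
    · simp only [Prod.mk_add_mk, Prod.mk.injEq]
      exact ⟨trivial, by ring⟩
    · simp only [Prod.mk_add_mk, Prod.mk.injEq]
      constructor <;> ring

include hm hcross in
lemma red_up (a b : ℤ) : Red G (a, b) (a, b+1) ↔ G.Adj (a, b) (a+1, b+2) := by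
  constructor
  · rintro ⟨p, q, r, s, hpq, hrs, hne, hsum1, hsum2⟩
    have hsum' : p + q = (2*a+1, 2*b+2) := by
      rw [hsum2]
      simp only [Prod.mk_add_mk, Prod.mk.injEq]
      constructor <;> ring
    rcases classify_v hm a b hpq hsum' with hc | hc
    · exact adj_of_pair hpq hc
    · exact (pair_v hm hcross a b).2 (adj_of_pair hpq hc)
  · intro h
    refine ⟨(a,b), (a+1,b+2), (a+1,b), (a,b+2), h, (pair_v hm hcross a b).1 h, ?_, ?_, ?_⟩
    · intro hEq
      rcases Set.pair_eq_pair_iff.mp hEq with ⟨h1, -⟩ | ⟨h1, -⟩ <;>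
        (rw [Prod.mk.injEq] at h1; omega)
    · simp only [Prod.mk_add_mk, Prod.mk.injEq]
      exact ⟨by ring, trivial⟩
    · simp only [Prod.mk_add_mk, Prod.mk.injEq]
      constructor <;> ring

include hm hcross in
lemma red_down (a b : ℤ) : Red G (a, b) (a, b-1) ↔ G.Adj (a, b-1) (a+1, b+1) := by
  have hp := pair_v hm hcross a (b-1)
  rw [show (b-1 : ℤ)+2 = b+1 by ring] at hp
  constructor
  · rintro ⟨p, q, r, s, hpq, hrs, hne, hsum1, hsum2⟩
    have hsum' : p + q = (2*a+1, 2*(b-1)+2) := by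
      rw [hsum2]
      simp only [Prod.mk_add_mk, Prod.mk.injEq]
      constructor <;> ring
    have hcl := classify_v hm a (b-1) hpq hsum'
    rw [show (b-1 : ℤ)+2 = b+1 by ring] at hcl
    rcases hcl with hc | hc
    · exact adj_of_pair hpq hc
    · exact hp.2 (adj_of_pair hpq hc)
  · intro h
    refine ⟨(a,b-1), (a+1,b+1), (a+1,b-1), (a,b+1), h, hp.1 h, ?_, ?_, ?_⟩
    · intro hEq
      rcases Set.pair_eq_pair_iff.mp hEq with ⟨h1, -⟩ | ⟨h1, -⟩ <;>
        (rw [Prod.mk.injEq] at h1; omega)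
    · simp only [Prod.mk_add_mk, Prod.mk.injEq]
      exact ⟨by ring, trivial⟩
    · simp only [Prod.mk_add_mk, Prod.mk.injEq]
      constructor <;> ring

end

end RedAux

/-- For a crosspatch knight pseudotour `G` on the m×n board, every grid vertex is
incident to an even number of red board edges. -/
theorem red_degree_even (m n : ℕ) (G : SimpleGraph (ℤ × ℤ))
    (hmoves : ∀ p q, G.Adj p q → OnBoard m n p ∧ OnBoard m n q ∧ IsKnightDiff (p - q))
    (hdeg : ∀ p, OnBoard m n p → (G.neighborSet p).ncard = 2)
    (hcross : ∀ p q, G.Adj p q → ∃ r s, G.Adj r s ∧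
      ({p, q} : Set (ℤ × ℤ)) ≠ {r, s} ∧ p + q = r + s)
    (u : ℤ × ℤ) (hu : InGrid m n u) :
    Even {w : ℤ × ℤ | InGrid m n w ∧ IsUnitStep (w - u) ∧ Red G u w}.ncard := by
  classical
  obtain ⟨a, b⟩ := u
  have hgf := RedAux.gf_eq_zero hmoves hcross hdeg a b
  have hne1 : ((a+1,b) : ℤ×ℤ) ∉ ({(a-1,b), (a,b+1), (a,b-1)} : Finset (ℤ×ℤ)) := by
    simp only [Finset.mem_insert, Finset.mem_singleton, Prod.mk.injEq]
    rintro (⟨h1,h2⟩|⟨h1,h2⟩|⟨h1,h2⟩) <;> omega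
  have hne2 : ((a-1,b) : ℤ×ℤ) ∉ ({(a,b+1), (a,b-1)} : Finset (ℤ×ℤ)) := by
    simp only [Finset.mem_insert, Finset.mem_singleton, Prod.mk.injEq]
    rintro (⟨h1,h2⟩|⟨h1,h2⟩) <;> omega
  have hne3 : ((a,b+1) : ℤ×ℤ) ∉ ({(a,b-1)} : Finset (ℤ×ℤ)) := by
    simp only [Finset.mem_singleton, Prod.mk.injEq]
    rintro ⟨h1,h2⟩
    omega
  have hset : {w : ℤ × ℤ | InGrid m n w ∧ IsUnitStep (w - (a, b)) ∧ Red G (a, b) w} =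
      ↑((({(a+1,b), (a-1,b), (a,b+1), (a,b-1)} : Finset (ℤ × ℤ))).filter
        (fun w => Red G (a, b) w)) := by
    ext ⟨w1, w2⟩
    simp only [Set.mem_setOf_eq, Finset.mem_coe, Finset.mem_filter, Finset.mem_insert,
      Finset.mem_singleton, Prod.mk.injEq]
    constructor
    · rintro ⟨-, hstep, hred⟩
      refine ⟨?_, hred⟩
      rw [Prod.mk_sub_mk] at hstep
      have hstep' : (|w1 - a| = 1 ∧ w2 - b = 0) ∨ (w1 - a = 0 ∧ |w2 - b| = 1) := hstep
      simp only [Int.abs_eq_natAbs] at hstep'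
      rcases hstep' with ⟨h1, h2⟩ | ⟨h1, h2⟩
      · have hx : w1 - a = 1 ∨ w1 - a = -1 := by omega
        rcases hx with hx | hx
        · exact Or.inl ⟨by omega, by omega⟩
        · exact Or.inr (Or.inl ⟨by omega, by omega⟩)
      · have hy : w2 - b = 1 ∨ w2 - b = -1 := by omega
        rcases hy with hy | hy
        · exact Or.inr (Or.inr (Or.inl ⟨by omega, by omega⟩))
        · exact Or.inr (Or.inr (Or.inr ⟨by omega, by omega⟩))
    · rintro ⟨hmem, hred⟩
      rcases hmem with ⟨h1, h2⟩ | ⟨h1, h2⟩ | ⟨h1, h2⟩ | ⟨h1, h2⟩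
      · have hw : ((w1, w2) : ℤ×ℤ) = (a+1, b) := by rw [Prod.mk.injEq]; exact ⟨h1, h2⟩
        rw [hw] at hred ⊢
        have hR := (RedAux.red_right hmoves hcross a b).1 hred
        obtain ⟨o1, o2, -⟩ := hmoves _ _ hR
        have o1' : 1 ≤ a ∧ a ≤ (m:ℤ) ∧ 1 ≤ b ∧ b ≤ (n:ℤ) := o1
        have o2' : 1 ≤ a+2 ∧ a+2 ≤ (m:ℤ) ∧ 1 ≤ b+1 ∧ b+1 ≤ (n:ℤ) := o2
        refine ⟨⟨by omega, by omega, by omega, by omega⟩, ?_, hred⟩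
        rw [show ((a+1, b) : ℤ×ℤ) - (a, b) = (1, 0) by rw [Prod.mk_sub_mk]; norm_num]
        exact Or.inl ⟨abs_one, rfl⟩
      · have hw : ((w1, w2) : ℤ×ℤ) = (a-1, b) := by rw [Prod.mk.injEq]; exact ⟨h1, h2⟩
        rw [hw] at hred ⊢
        have hR := (RedAux.red_left hmoves hcross a b).1 hred
        obtain ⟨o1, o2, -⟩ := hmoves _ _ hR
        have o1' : 1 ≤ a-1 ∧ a-1 ≤ (m:ℤ) ∧ 1 ≤ b ∧ b ≤ (n:ℤ) := o1
        have o2' : 1 ≤ a+1 ∧ a+1 ≤ (m:ℤ) ∧ 1 ≤ b+1 ∧ b+1 ≤ (n:ℤ) := o2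
        refine ⟨⟨by omega, by omega, by omega, by omega⟩, ?_, hred⟩
        rw [show ((a-1, b) : ℤ×ℤ) - (a, b) = (-1, 0) by rw [Prod.mk_sub_mk]; norm_num]
        exact Or.inl ⟨by norm_num, rfl⟩
      · have hw : ((w1, w2) : ℤ×ℤ) = (a, b+1) := by rw [Prod.mk.injEq]; exact ⟨h1, h2⟩
        rw [hw] at hred ⊢
        have hR := (RedAux.red_up hmoves hcross a b).1 hred
        obtain ⟨o1, o2, -⟩ := hmoves _ _ hR
        have o1' : 1 ≤ a ∧ a ≤ (m:ℤ) ∧ 1 ≤ b ∧ b ≤ (n:ℤ) := o1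
        have o2' : 1 ≤ a+1 ∧ a+1 ≤ (m:ℤ) ∧ 1 ≤ b+2 ∧ b+2 ≤ (n:ℤ) := o2
        refine ⟨⟨by omega, by omega, by omega, by omega⟩, ?_, hred⟩
        rw [show ((a, b+1) : ℤ×ℤ) - (a, b) = (0, 1) by rw [Prod.mk_sub_mk]; norm_num]
        exact Or.inr ⟨rfl, abs_one⟩
      · have hw : ((w1, w2) : ℤ×ℤ) = (a, b-1) := by rw [Prod.mk.injEq]; exact ⟨h1, h2⟩
        rw [hw] at hred ⊢
        have hR := (RedAux.red_down hmoves hcross a b).1 hred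
        obtain ⟨o1, o2, -⟩ := hmoves _ _ hR
        have o1' : 1 ≤ a ∧ a ≤ (m:ℤ) ∧ 1 ≤ b-1 ∧ b-1 ≤ (n:ℤ) := o1
        have o2' : 1 ≤ a+1 ∧ a+1 ≤ (m:ℤ) ∧ 1 ≤ b+1 ∧ b+1 ≤ (n:ℤ) := o2
        refine ⟨⟨by omega, by omega, by omega, by omega⟩, ?_, hred⟩
        rw [show ((a, b-1) : ℤ×ℤ) - (a, b) = (0, -1) by rw [Prod.mk_sub_mk]; norm_num]
        exact Or.inr ⟨rfl, by norm_num⟩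
  rw [hset, Set.ncard_coe_finset]
  have hcast : (((({(a+1,b), (a-1,b), (a,b+1), (a,b-1)} : Finset (ℤ × ℤ))).filter
      (fun w => Red G (a, b) w)).card : ZMod 2) = 0 := by
    rw [Finset.natCast_card_filter]
    rw [Finset.sum_insert hne1, Finset.sum_insert hne2, Finset.sum_insert hne3,
      Finset.sum_singleton]
    simp only [RedAux.ite_ind]
    rw [RedAux.ind_congr (RedAux.red_right hmoves hcross a b),
      RedAux.ind_congr (RedAux.red_left hmoves hcross a b),
      RedAux.ind_congr (RedAux.red_up hmoves hcross a b),
      RedAux.ind_congr (RedAux.red_down hmoves hcross a b)]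
    unfold RedAux.gf at hgf
    linear_combination hgf
  rw [even_iff_two_dvd]
  exact (ZMod.natCast_eq_zero_iff _ 2).mp hcast
end

section
/- Let G be a crosspatch knight pseudotour on an m×n rectangular board and H the graph of red board edges. Then every grid vertex has degree 0 or 2 in H; in particular H is a disjoint union of simple cycles. -/
private lemma absone {x : ℤ} (h : |x| = 1) : x = 1 ∨ x = -1 :=
  (abs_eq (by norm_num)).mp h

private lemma abstwo {x : ℤ} (h : |x| = 2) : x = 2 ∨ x = -2 :=
  (abs_eq (by norm_num)).mp h

private lemma knight_cases (p q : ℤ × ℤ) (hd : IsKnightDiff (p - q)) :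
    ((p.1 - q.1 = 1 ∨ p.1 - q.1 = -1) ∧ (p.2 - q.2 = 2 ∨ p.2 - q.2 = -2)) ∨
    ((p.1 - q.1 = 2 ∨ p.1 - q.1 = -2) ∧ (p.2 - q.2 = 1 ∨ p.2 - q.2 = -1)) := by
  obtain ⟨h1, h2⟩ | ⟨h1, h2⟩ := hd
  · exact Or.inl ⟨absone (by simpa using h1), abstwo (by simpa using h2)⟩
  · exact Or.inr ⟨abstwo (by simpa using h1), absone (by simpa using h2)⟩

private lemma unit_step_cases {w v : ℤ × ℤ} (h : IsUnitStep (w - v)) :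
    w = (v.1 + 1, v.2) ∨ w = (v.1 - 1, v.2) ∨ w = (v.1, v.2 + 1) ∨ w = (v.1, v.2 - 1) := by
  obtain ⟨ha, hb⟩ | ⟨ha, hb⟩ := h
  · have ha' := absone (by simpa using ha)
    have hb' : w.2 - v.2 = 0 := by simpa using hb
    simp only [Prod.ext_iff]
    omega
  · have ha' : w.1 - v.1 = 0 := by simpa using ha
    have hb' := absone (by simpa using hb)
    simp only [Prod.ext_iff]
    omega

private lemma pair_ne {x1 y1 x2 y2 : ℤ} (h : x1 ≠ x2 ∨ y1 ≠ y2) :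
    ((x1, y1) : ℤ × ℤ) ≠ (x2, y2) := by
  intro hc
  rw [Prod.mk.injEq] at hc
  tauto

private lemma no_three (G : SimpleGraph (ℤ × ℤ)) {p x y z : ℤ × ℤ}
    (hx : G.Adj p x) (hy : G.Adj p y) (hz : G.Adj p z)
    (hxy : x ≠ y) (hxz : x ≠ z) (hyz : y ≠ z)
    (h2 : (G.neighborSet p).ncard = 2) : False := by
  rw [Set.ncard_eq_two] at h2
  obtain ⟨a, b, hab, hset⟩ := h2
  have hx' : x ∈ ({a, b} : Set (ℤ × ℤ)) := hset ▸ ((G.mem_neighborSet p x).mpr hx)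
  have hy' : y ∈ ({a, b} : Set (ℤ × ℤ)) := hset ▸ ((G.mem_neighborSet p y).mpr hy)
  have hz' : z ∈ ({a, b} : Set (ℤ × ℤ)) := hset ▸ ((G.mem_neighborSet p z).mpr hz)
  simp only [Set.mem_insert_iff, Set.mem_singleton_iff] at hx' hy' hz'
  rcases hx' with rfl | rfl <;> rcases hy' with rfl | rfl <;> rcases hz' with rfl | rfl <;>
    simp_all

private lemma red_two_edges {m n : ℕ} {G : SimpleGraph (ℤ × ℤ)}
    (hmoves : ∀ p q, G.Adj p q → OnBoard m n p ∧ OnBoard m n q ∧ IsKnightDiff (p - q))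
    {v w A B A' B' : ℤ × ℤ} (h : Red G v w)
    (huniq : ∀ p q : ℤ × ℤ, IsKnightDiff (p - q) → p + q = v + w + (1, 1) →
      (p = A ∧ q = B) ∨ (p = B ∧ q = A) ∨ (p = A' ∧ q = B') ∨ (p = B' ∧ q = A')) :
    G.Adj A B ∧ G.Adj A' B' := by
  obtain ⟨p, q, r, s, hpq, hrs, hne, hsum, hsum2⟩ := h
  have h1 := huniq p q (hmoves p q hpq).2.2 hsum2
  have h2 := huniq r s (hmoves r s hrs).2.2 (hsum.symm.trans hsum2)
  rcases h1 with ⟨rfl, rfl⟩ | ⟨rfl, rfl⟩ | ⟨rfl, rfl⟩ | ⟨rfl, rfl⟩ <;>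
    rcases h2 with ⟨rfl, rfl⟩ | ⟨rfl, rfl⟩ | ⟨rfl, rfl⟩ | ⟨rfl, rfl⟩ <;>
    first
      | exact absurd rfl hne
      | exact absurd (Set.pair_comm _ _) hne
      | exact absurd (Set.pair_comm _ _).symm hne
      | exact ⟨hpq, hrs⟩
      | exact ⟨hpq, hrs.symm⟩
      | exact ⟨hpq.symm, hrs⟩
      | exact ⟨hpq.symm, hrs.symm⟩
      | exact ⟨hrs, hpq⟩
      | exact ⟨hrs, hpq.symm⟩
      | exact ⟨hrs.symm, hpq⟩
      | exact ⟨hrs.symm, hpq.symm⟩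

private lemma red_symm {G : SimpleGraph (ℤ × ℤ)} {v w : ℤ × ℤ} (h : Red G v w) :
    Red G w v := by
  obtain ⟨p, q, r, s, h1, h2, h3, h4, h5⟩ := h
  exact ⟨p, q, r, s, h1, h2, h3, h4, by rw [add_comm w v]; exact h5⟩

/-- decode a cross centered on the right edge of grid vertex `(x, y)` -/
private lemma uniq_right (x y : ℤ) : ∀ p q : ℤ × ℤ, IsKnightDiff (p - q) →
    p + q = (x, y) + (x + 1, y) + (1, 1) →
    (p = ((x + 2, y + 1) : ℤ × ℤ) ∧ q = (x, y)) ∨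
    (p = ((x, y) : ℤ × ℤ) ∧ q = (x + 2, y + 1)) ∨
    (p = ((x + 2, y) : ℤ × ℤ) ∧ q = (x, y + 1)) ∨
    (p = ((x, y + 1) : ℤ × ℤ) ∧ q = (x + 2, y)) := by
  intro p q hd hs
  have hc := knight_cases p q hd
  obtain ⟨p1, p2⟩ := p
  obtain ⟨q1, q2⟩ := q
  simp only [Prod.mk_add_mk, Prod.mk.injEq] at hs hc ⊢
  obtain ⟨hs1, hs2⟩ := hs
  have e1 : p1 - q1 = 2 ∨ p1 - q1 = -2 := by omega
  have e2 : p2 - q2 = 1 ∨ p2 - q2 = -1 := by omega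
  rcases e1 with h1d | h1d <;> rcases e2 with h2d | h2d
  · exact Or.inl (by omega)
  · exact Or.inr (Or.inr (Or.inl (by omega)))
  · exact Or.inr (Or.inr (Or.inr (by omega)))
  · exact Or.inr (Or.inl (by omega))

/-- decode a cross centered on the left edge of grid vertex `(x, y)` -/
private lemma uniq_left (x y : ℤ) : ∀ p q : ℤ × ℤ, IsKnightDiff (p - q) →
    p + q = (x, y) + (x - 1, y) + (1, 1) →
    (p = ((x + 1, y + 1) : ℤ × ℤ) ∧ q = (x - 1, y)) ∨
    (p = ((x - 1, y) : ℤ × ℤ) ∧ q = (x + 1, y + 1)) ∨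
    (p = ((x + 1, y) : ℤ × ℤ) ∧ q = (x - 1, y + 1)) ∨
    (p = ((x - 1, y + 1) : ℤ × ℤ) ∧ q = (x + 1, y)) := by
  intro p q hd hs
  have hc := knight_cases p q hd
  obtain ⟨p1, p2⟩ := p
  obtain ⟨q1, q2⟩ := q
  simp only [Prod.mk_add_mk, Prod.mk.injEq] at hs hc ⊢
  obtain ⟨hs1, hs2⟩ := hs
  have e1 : p1 - q1 = 2 ∨ p1 - q1 = -2 := by omega
  have e2 : p2 - q2 = 1 ∨ p2 - q2 = -1 := by omega
  rcases e1 with h1d | h1d <;> rcases e2 with h2d | h2d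
  · exact Or.inl (by omega)
  · exact Or.inr (Or.inr (Or.inl (by omega)))
  · exact Or.inr (Or.inr (Or.inr (by omega)))
  · exact Or.inr (Or.inl (by omega))

/-- decode a cross centered on the bottom edge of grid vertex `(x, y)` -/
private lemma uniq_down (x y : ℤ) : ∀ p q : ℤ × ℤ, IsKnightDiff (p - q) →
    p + q = (x, y) + (x, y - 1) + (1, 1) →
    (p = ((x + 1, y + 1) : ℤ × ℤ) ∧ q = (x, y - 1)) ∨
    (p = ((x, y - 1) : ℤ × ℤ) ∧ q = (x + 1, y + 1)) ∨
    (p = ((x + 1, y - 1) : ℤ × ℤ) ∧ q = (x, y + 1)) ∨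
    (p = ((x, y + 1) : ℤ × ℤ) ∧ q = (x + 1, y - 1)) := by
  intro p q hd hs
  have hc := knight_cases p q hd
  obtain ⟨p1, p2⟩ := p
  obtain ⟨q1, q2⟩ := q
  simp only [Prod.mk_add_mk, Prod.mk.injEq] at hs hc ⊢
  obtain ⟨hs1, hs2⟩ := hs
  have e1 : p1 - q1 = 1 ∨ p1 - q1 = -1 := by omega
  have e2 : p2 - q2 = 2 ∨ p2 - q2 = -2 := by omega
  rcases e1 with h1d | h1d <;> rcases e2 with h2d | h2d
  · exact Or.inl (by omega)
  · exact Or.inr (Or.inr (Or.inl (by omega)))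
  · exact Or.inr (Or.inr (Or.inr (by omega)))
  · exact Or.inr (Or.inl (by omega))

/-- decode a cross centered on the top edge of grid vertex `(x, y)` -/
private lemma uniq_up (x y : ℤ) : ∀ p q : ℤ × ℤ, IsKnightDiff (p - q) →
    p + q = (x, y) + (x, y + 1) + (1, 1) →
    (p = ((x + 1, y + 2) : ℤ × ℤ) ∧ q = (x, y)) ∨
    (p = ((x, y) : ℤ × ℤ) ∧ q = (x + 1, y + 2)) ∨
    (p = ((x + 1, y) : ℤ × ℤ) ∧ q = (x, y + 2)) ∨
    (p = ((x, y + 2) : ℤ × ℤ) ∧ q = (x + 1, y)) := by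
  intro p q hd hs
  have hc := knight_cases p q hd
  obtain ⟨p1, p2⟩ := p
  obtain ⟨q1, q2⟩ := q
  simp only [Prod.mk_add_mk, Prod.mk.injEq] at hs hc ⊢
  obtain ⟨hs1, hs2⟩ := hs
  have e1 : p1 - q1 = 1 ∨ p1 - q1 = -1 := by omega
  have e2 : p2 - q2 = 2 ∨ p2 - q2 = -2 := by omega
  rcases e1 with h1d | h1d <;> rcases e2 with h2d | h2d
  · exact Or.inl (by omega)
  · exact Or.inr (Or.inr (Or.inl (by omega)))
  · exact Or.inr (Or.inr (Or.inr (by omega)))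
  · exact Or.inr (Or.inl (by omega))

set_option maxHeartbeats 1000000 in
/-- For a crosspatch knight pseudotour `G` on the m×n board, every grid vertex has
degree 0 or 2 in the graph `H` of red board edges (given that every grid vertex has
even degree in `H`). -/
theorem red_degree_zero_or_two (m n : ℕ) (G : SimpleGraph (ℤ × ℤ))
    (hmoves : ∀ p q, G.Adj p q → OnBoard m n p ∧ OnBoard m n q ∧ IsKnightDiff (p - q))
    (hdeg : ∀ p, OnBoard m n p → (G.neighborSet p).ncard = 2)
    (hcross : ∀ p q, G.Adj p q → ∃ r s, G.Adj r s ∧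
      ({p, q} : Set (ℤ × ℤ)) ≠ {r, s} ∧ p + q = r + s)
    (heven : ∀ u : ℤ × ℤ, InGrid m n u →
      Even {w : ℤ × ℤ | InGrid m n w ∧ IsUnitStep (w - u) ∧ Red G u w}.ncard)
    (u : ℤ × ℤ) (hu : InGrid m n u) :
    {w : ℤ × ℤ | InGrid m n w ∧ IsUnitStep (w - u) ∧ Red G u w}.ncard = 0 ∨
    {w : ℤ × ℤ | InGrid m n w ∧ IsUnitStep (w - u) ∧ Red G u w}.ncard = 2 := by
  obtain ⟨a, b⟩ := u
  set S := {w : ℤ × ℤ | InGrid m n w ∧ IsUnitStep (w - (a, b)) ∧ Red G (a, b) w} with hSdef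
  set T : Set (ℤ × ℤ) := {(a + 1, b), (a - 1, b), (a, b + 1), (a, b - 1)} with hTdef
  have hsub : S ⊆ T := by
    intro w hw
    obtain ⟨-, hstep, -⟩ := hw
    rcases unit_step_cases hstep with rfl | rfl | rfl | rfl <;> simp [hTdef]
  have hfin : T.Finite := Set.toFinite _
  have hT4 : T.ncard ≤ 4 := by
    rw [hTdef]
    have h1 := Set.ncard_insert_le ((a + 1, b) : ℤ × ℤ)
      ({(a - 1, b), (a, b + 1), (a, b - 1)} : Set (ℤ × ℤ))
    have h2 := Set.ncard_insert_le ((a - 1, b) : ℤ × ℤ)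
      ({(a, b + 1), (a, b - 1)} : Set (ℤ × ℤ))
    have h3 := Set.ncard_insert_le ((a, b + 1) : ℤ × ℤ) ({(a, b - 1)} : Set (ℤ × ℤ))
    have h4 := Set.ncard_singleton ((a, b - 1) : ℤ × ℤ)
    omega
  have hle : S.ncard ≤ 4 := (Set.ncard_le_ncard hsub hfin).trans hT4
  have heS : Even S.ncard := heven (a, b) hu
  obtain ⟨k, hk⟩ := heS
  have h024 : S.ncard = 0 ∨ S.ncard = 2 ∨ S.ncard = 4 := by omega
  rcases h024 with h | h | h
  · exact Or.inl h
  · exact Or.inr h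
  exfalso
  have heqT : S = T := Set.eq_of_subset_of_ncard_le hsub (by rw [h]; exact hT4) hfin
  have memS : ∀ x : ℤ × ℤ, x ∈ T →
      InGrid m n x ∧ IsUnitStep (x - (a, b)) ∧ Red G (a, b) x := by
    intro x hx
    have hxS : x ∈ S := by rw [heqT]; exact hx
    exact hxS
  have hRed1 := (memS (a + 1, b) (by simp [hTdef])).2.2
  have hRed2 := (memS (a - 1, b) (by simp [hTdef])).2.2
  have hRed3full := memS (a, b + 1) (by simp [hTdef])
  have hRed4 := (memS (a, b - 1) (by simp [hTdef])).2.2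
  have hGrid' : InGrid m n (a, b + 1) := hRed3full.1
  have hRed3 := hRed3full.2.2
  clear hk h hle hT4 hfin hsub heqT memS hRed3full hSdef hTdef
  clear_value S T
  clear S T
  -- the two edges of the cross on the right edge of u
  have hc1 := red_two_edges hmoves hRed1 (uniq_right a b)
  -- the two edges of the cross on the left edge of u
  have hc2 := red_two_edges hmoves hRed2 (uniq_left a b)
  -- the two edges of the cross on the bottom edge of u
  have hc4 := red_two_edges hmoves hRed4 (uniq_down a b)
  have hXboard : OnBoard m n ((a, b + 1) : ℤ × ℤ) := (hmoves _ _ hc1.2).2.1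
  have hYboard : OnBoard m n ((a + 1, b + 1) : ℤ × ℤ) := (hmoves _ _ hc2.1).1
  have hXdeg := hdeg _ hXboard
  have hYdeg := hdeg _ hYboard
  -- the set of red edges at the grid vertex (a, b+1) is exactly {(a,b)}
  have hS' : {w : ℤ × ℤ | InGrid m n w ∧ IsUnitStep (w - (a, b + 1)) ∧ Red G (a, b + 1) w}
      = {((a, b) : ℤ × ℤ)} := by
    ext w
    simp only [Set.mem_setOf_eq, Set.mem_singleton_iff]
    constructor
    · rintro ⟨hg, hstep, hred⟩
      rcases unit_step_cases hstep with rfl | rfl | rfl | rfl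
      · exfalso
        have hc := red_two_edges hmoves hred (uniq_right a (b + 1))
        exact no_three G hc1.2.symm hc4.2.symm hc.1.symm
          (pair_ne (Or.inl (by omega))) (pair_ne (Or.inr (by omega)))
          (pair_ne (Or.inl (by omega))) hXdeg
      · exfalso
        have hc := red_two_edges hmoves hred (uniq_left a (b + 1))
        exact no_three G hc2.1 hc4.1 hc.2
          (pair_ne (Or.inl (by omega))) (pair_ne (Or.inr (by omega)))
          (pair_ne (Or.inl (by omega))) hYdeg
      · exfalso
        have hc := red_two_edges hmoves hred (uniq_up a (b + 1))
        exact no_three G hc2.1 hc4.1 hc.2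
          (pair_ne (Or.inl (by omega))) (pair_ne (Or.inr (by omega)))
          (pair_ne (Or.inr (by omega))) hYdeg
      · simp only [Prod.ext_iff]
        constructor <;> simp
    · rintro rfl
      refine ⟨hu, ?_, red_symm hRed3⟩
      right
      constructor
      · show a - a = 0
        ring
      · show |b - (b + 1)| = 1
        rw [show b - (b + 1) = -1 by ring]
        norm_num
  have hcontra := heven (a, b + 1) hGrid'
  rw [hS', Set.ncard_singleton] at hcontra
  exact (Nat.not_even_one) hcontra
end

section
/- In a crosspatch knight pseudotour G on a rectangular board, no grid vertex can have all four of its incident board edges red: if the four board edges around a vertex v were all red, then one of the two squares above v would have degree at least 3 in G, contradicting the pseudotour property. -/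
private lemma knight_iff (d : ℤ × ℤ) :
    IsKnightDiff d ↔ ((d.1 = 1 ∨ d.1 = -1) ∧ (d.2 = 2 ∨ d.2 = -2)) ∨
      ((d.1 = 2 ∨ d.1 = -2) ∧ (d.2 = 1 ∨ d.2 = -1)) := by
  unfold IsKnightDiff
  rw [abs_eq (by norm_num : (0:ℤ) ≤ 1), abs_eq (by norm_num : (0:ℤ) ≤ 2),
    abs_eq (by norm_num : (0:ℤ) ≤ 2), abs_eq (by norm_num : (0:ℤ) ≤ 1)]

set_option maxHeartbeats 2000000 in
private lemma partner_eq {p q r s : ℤ × ℤ} (hd : IsKnightDiff (p - q)) (he : IsKnightDiff (r - s))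
    (hsum : p + q = r + s) (hne : ({p, q} : Set (ℤ × ℤ)) ≠ {r, s}) :
    (r = (p.1, q.2) ∧ s = (q.1, p.2)) ∨ (r = (q.1, p.2) ∧ s = (p.1, q.2)) := by
  simp only [ne_eq, Set.pair_eq_pair_iff] at hne
  push_neg at hne
  obtain ⟨p1, p2⟩ := p; obtain ⟨q1, q2⟩ := q; obtain ⟨r1, r2⟩ := r; obtain ⟨s1, s2⟩ := s
  rw [knight_iff] at hd he
  simp only [ne_eq, Prod.mk_sub_mk, Prod.mk_add_mk, Prod.mk.injEq] at hd he hsum hne ⊢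
  obtain ⟨hs1, hs2⟩ := hsum
  rcases hd with ⟨hd1 | hd1, hd2 | hd2⟩ | ⟨hd1 | hd1, hd2 | hd2⟩ <;>
    rcases he with ⟨he1 | he1, he2 | he2⟩ | ⟨he1 | he1, he2 | he2⟩ <;>
    omega

private lemma red_pairs {m n : ℕ} {G : SimpleGraph (ℤ × ℤ)}
    (hmoves : ∀ p q, G.Adj p q → OnBoard m n p ∧ OnBoard m n q ∧ IsKnightDiff (p - q))
    {v w S : ℤ × ℤ} (hred : Red G v w) (heq : v + w + (1, 1) = S) :
    ∃ p q : ℤ × ℤ, G.Adj p q ∧ G.Adj (p.1, q.2) (q.1, p.2) ∧ p + q = S ∧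
      IsKnightDiff (p - q) := by
  obtain ⟨p, q, r, s, hpq, hrs, hne, hsum, hS⟩ := hred
  have hd := (hmoves _ _ hpq).2.2
  have he := (hmoves _ _ hrs).2.2
  rcases partner_eq hd he hsum hne with ⟨hr, hs⟩ | ⟨hr, hs⟩
  · refine ⟨p, q, hpq, ?_, hS.trans heq, hd⟩
    rw [hr, hs] at hrs; exact hrs
  · refine ⟨p, q, hpq, ?_, hS.trans heq, hd⟩
    rw [hr, hs] at hrs; exact hrs.symm

private lemma cross_H {G : SimpleGraph (ℤ × ℤ)} {α β : ℤ}
    (h : ∃ p q : ℤ × ℤ, G.Adj p q ∧ G.Adj (p.1, q.2) (q.1, p.2) ∧ p + q = (2*α, 2*β+1) ∧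
      IsKnightDiff (p - q)) :
    G.Adj (α - 1, β) (α + 1, β + 1) ∧ G.Adj (α + 1, β) (α - 1, β + 1) := by
  obtain ⟨⟨p1, p2⟩, ⟨q1, q2⟩, hpq, hmix, hsum, hd⟩ := h
  rw [knight_iff] at hd
  simp only [Prod.mk_sub_mk, Prod.mk_add_mk, Prod.mk.injEq] at hd hsum
  dsimp only at hmix
  obtain ⟨hs1, hs2⟩ := hsum
  rcases hd with ⟨hd1, hd2⟩ | ⟨hd1 | hd1, hd2 | hd2⟩
  · exfalso; omega
  · -- p1 - q1 = 2, p2 - q2 = 1 : p = (α+1, β+1), q = (α-1, β)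
    have e1 : p1 = α + 1 := by omega
    have e2 : q1 = α - 1 := by omega
    have e3 : p2 = β + 1 := by omega
    have e4 : q2 = β := by omega
    subst e1; subst e2; subst e3; subst e4
    exact ⟨hpq.symm, hmix⟩
  · -- p1 - q1 = 2, p2 - q2 = -1 : p = (α+1, β), q = (α-1, β+1)
    have e1 : p1 = α + 1 := by omega
    have e2 : q1 = α - 1 := by omega
    have e3 : p2 = β := by omega
    have e4 : q2 = β + 1 := by omega
    subst e1; subst e2; subst e3; subst e4
    exact ⟨hmix.symm, hpq⟩
  · -- p1 - q1 = -2, p2 - q2 = 1 : p = (α-1, β+1), q = (α+1, β)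
    have e1 : p1 = α - 1 := by omega
    have e2 : q1 = α + 1 := by omega
    have e3 : p2 = β + 1 := by omega
    have e4 : q2 = β := by omega
    subst e1; subst e2; subst e3; subst e4
    exact ⟨hmix, hpq.symm⟩
  · -- p1 - q1 = -2, p2 - q2 = -1 : p = (α-1, β), q = (α+1, β+1)
    have e1 : p1 = α - 1 := by omega
    have e2 : q1 = α + 1 := by omega
    have e3 : p2 = β := by omega
    have e4 : q2 = β + 1 := by omega
    subst e1; subst e2; subst e3; subst e4
    exact ⟨hpq, hmix.symm⟩

private lemma cross_V {G : SimpleGraph (ℤ × ℤ)} {α β : ℤ}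
    (h : ∃ p q : ℤ × ℤ, G.Adj p q ∧ G.Adj (p.1, q.2) (q.1, p.2) ∧ p + q = (2*α+1, 2*β) ∧
      IsKnightDiff (p - q)) :
    G.Adj (α, β - 1) (α + 1, β + 1) ∧ G.Adj (α + 1, β - 1) (α, β + 1) := by
  obtain ⟨⟨p1, p2⟩, ⟨q1, q2⟩, hpq, hmix, hsum, hd⟩ := h
  rw [knight_iff] at hd
  simp only [Prod.mk_sub_mk, Prod.mk_add_mk, Prod.mk.injEq] at hd hsum
  dsimp only at hmix
  obtain ⟨hs1, hs2⟩ := hsum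
  rcases hd with ⟨hd1 | hd1, hd2 | hd2⟩ | ⟨hd1, hd2⟩
  · -- (1,2) : p = (α+1, β+1), q = (α, β-1)
    have e1 : p1 = α + 1 := by omega
    have e2 : q1 = α := by omega
    have e3 : p2 = β + 1 := by omega
    have e4 : q2 = β - 1 := by omega
    subst e1; subst e2; subst e3; subst e4
    exact ⟨hpq.symm, hmix⟩
  · -- (1,-2) : p = (α+1, β-1), q = (α, β+1)
    have e1 : p1 = α + 1 := by omega
    have e2 : q1 = α := by omega
    have e3 : p2 = β - 1 := by omega
    have e4 : q2 = β + 1 := by omega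
    subst e1; subst e2; subst e3; subst e4
    exact ⟨hmix.symm, hpq⟩
  · -- (-1,2) : p = (α, β+1), q = (α+1, β-1)
    have e1 : p1 = α := by omega
    have e2 : q1 = α + 1 := by omega
    have e3 : p2 = β + 1 := by omega
    have e4 : q2 = β - 1 := by omega
    subst e1; subst e2; subst e3; subst e4
    exact ⟨hmix, hpq.symm⟩
  · -- (-1,-2) : p = (α, β-1), q = (α+1, β+1)
    have e1 : p1 = α := by omega
    have e2 : q1 = α + 1 := by omega
    have e3 : p2 = β - 1 := by omega
    have e4 : q2 = β + 1 := by omega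
    subst e1; subst e2; subst e3; subst e4
    exact ⟨hpq, hmix.symm⟩
  · exfalso; omega

private lemma deg_le {m n : ℕ} {G : SimpleGraph (ℤ × ℤ)}
    (hdeg : ∀ p, OnBoard m n p → (G.neighborSet p).ncard = 2)
    {z u1 u2 u3 : ℤ × ℤ} (hz : OnBoard m n z)
    (h1 : G.Adj z u1) (h2 : G.Adj z u2) (h3 : G.Adj z u3)
    (d12 : u1 ≠ u2) (d13 : u1 ≠ u3) (d23 : u2 ≠ u3) : False := by
  have hfin : (G.neighborSet z).Finite := by
    by_contra hinf
    have h0 : (G.neighborSet z).ncard = 0 := Set.Infinite.ncard hinf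
    rw [hdeg z hz] at h0
    exact two_ne_zero h0
  have hsub : ({u1, u2, u3} : Set (ℤ × ℤ)) ⊆ G.neighborSet z := by
    intro x hx
    rcases hx with rfl | rfl | rfl
    · exact h1
    · exact h2
    · exact h3
  have h3card : ({u1, u2, u3} : Set (ℤ × ℤ)).ncard = 3 := by
    rw [Set.ncard_insert_of_notMem (by simp [d12, d13]), Set.ncard_pair d23]
  have hle := Set.ncard_le_ncard hsub hfin
  rw [h3card, hdeg z hz] at hle
  omega

private lemma even_card_invol {α : Type*} [DecidableEq α] :
    ∀ (N : ℕ) (s : Finset α) (σ : α → α), s.card ≤ N → (∀ x ∈ s, σ x ∈ s) →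
      (∀ x ∈ s, σ (σ x) = x) → (∀ x ∈ s, σ x ≠ x) → Even s.card := by
  intro N
  induction N with
  | zero =>
    intro s σ h _ _ _
    have : s.card = 0 := Nat.le_zero.mp h
    simp [this]
  | succ N ih =>
    intro s σ hle hmem hinv hne
    rcases s.eq_empty_or_nonempty with rfl | ⟨x, hx⟩
    · simp
    · have hσx : σ x ∈ s := hmem x hx
      have hxne : σ x ≠ x := hne x hx
      have hmem' : σ x ∈ s.erase x := Finset.mem_erase.mpr ⟨hxne, hσx⟩
      set t := (s.erase x).erase (σ x) with ht
      have hmt : ∀ y ∈ t, y ≠ x ∧ y ≠ σ x ∧ y ∈ s := by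
        intro y hy
        have h1 := Finset.mem_erase.mp hy
        have h2 := Finset.mem_erase.mp h1.2
        exact ⟨h2.1, h1.1, h2.2⟩
      have hc2 : t.card + 2 = s.card := by
        have h1 := Finset.card_erase_add_one hx
        have h2 := Finset.card_erase_add_one hmem'
        rw [← ht] at h2
        omega
      have hteven : Even t.card := by
        refine ih t σ (by omega) ?_ ?_ ?_
        · intro y hy
          obtain ⟨hyx, hyσx, hys⟩ := hmt y hy
          have h1 : σ y ∈ s := hmem y hys
          have h2 : σ y ≠ σ x := fun h => hyx (by rw [← hinv y hys, h, hinv x hx])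
          have h3 : σ y ≠ x := fun h => hyσx (by rw [← hinv y hys, h])
          exact Finset.mem_erase.mpr ⟨h2, Finset.mem_erase.mpr ⟨h3, h1⟩⟩
        · intro y hy; exact hinv y (hmt y hy).2.2
        · intro y hy; exact hne y (hmt y hy).2.2
      obtain ⟨k, hk⟩ := hteven
      exact ⟨k + 1, by omega⟩


/-- partner/mirror map on ordered pairs of squares -/
def sigmaFn (a b : ℤ) (x : (ℤ × ℤ) × (ℤ × ℤ)) : (ℤ × ℤ) × (ℤ × ℤ) :=
  if x.1.1 ≤ a - 1 ∧ x.2.2 ≤ b then ((x.1.1, x.2.2), (x.2.1, x.1.2))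
  else ((x.2.1, x.1.2), (x.1.1, x.2.2))

lemma sigmaFn_mk (a b p1 p2 q1 q2 : ℤ) :
    sigmaFn a b ((p1, p2), (q1, q2)) =
      if p1 ≤ a - 1 ∧ q2 ≤ b then ((p1, q2), (q1, p2)) else ((q1, p2), (p1, q2)) := rfl

set_option maxHeartbeats 4000000 in
/-- In a crosspatch knight pseudotour, no grid vertex has all four of its incident
board edges red. -/
theorem not_all_four_red (m n : ℕ) (G : SimpleGraph (ℤ × ℤ))
    (hmoves : ∀ p q, G.Adj p q → OnBoard m n p ∧ OnBoard m n q ∧ IsKnightDiff (p - q))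
    (hdeg : ∀ p, OnBoard m n p → (G.neighborSet p).ncard = 2)
    (hcross : ∀ p q, G.Adj p q → ∃ r s, G.Adj r s ∧
      ({p, q} : Set (ℤ × ℤ)) ≠ {r, s} ∧ p + q = r + s)
    (v : ℤ × ℤ) :
    ¬ (Red G v (v + (1, 0)) ∧ Red G v (v - (1, 0)) ∧
       Red G v (v + (0, 1)) ∧ Red G v (v - (0, 1))) := by
  classical
  rintro ⟨hR1, hR2, hR3, hR4⟩
  obtain ⟨a, b⟩ := v
  -- extract the eight knight moves of the four red crosses
  have h1 := red_pairs hmoves hR1 (S := (2*(a+1), 2*b+1))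
    (by simp only [Prod.mk_add_mk, Prod.mk_sub_mk, Prod.mk.injEq]; omega)
  have h2 := red_pairs hmoves hR2 (S := (2*a, 2*b+1))
    (by simp only [Prod.mk_add_mk, Prod.mk_sub_mk, Prod.mk.injEq]; omega)
  have h3 := red_pairs hmoves hR3 (S := (2*a+1, 2*(b+1)))
    (by simp only [Prod.mk_add_mk, Prod.mk_sub_mk, Prod.mk.injEq]; omega)
  have h4 := red_pairs hmoves hR4 (S := (2*a+1, 2*b))
    (by simp only [Prod.mk_add_mk, Prod.mk_sub_mk, Prod.mk.injEq]; omega)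
  obtain ⟨E1', E2'⟩ := cross_H h1
  obtain ⟨Ehat, _⟩ := cross_H h2
  obtain ⟨E3', _⟩ := cross_V h3
  obtain ⟨_, E4'⟩ := cross_V h4
  -- Ehat : G.Adj (a-1, b) (a+1, b+1)
  have E1 : G.Adj (a, b) (a + 2, b + 1) := by
    have e1 : ((a : ℤ) + 1 - 1, (b : ℤ)) = (a, b) := by
      rw [Prod.mk.injEq]; constructor <;> omega
    have e2 : ((a : ℤ) + 1 + 1, (b : ℤ) + 1) = (a + 2, b + 1) := by
      rw [Prod.mk.injEq]; constructor <;> omega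
    rw [e1, e2] at E1'; exact E1'
  have E2 : G.Adj (a, b + 1) (a + 2, b) := by
    have e1 : ((a : ℤ) + 1 + 1, (b : ℤ)) = (a + 2, b) := by
      rw [Prod.mk.injEq]; constructor <;> omega
    have e2 : ((a : ℤ) + 1 - 1, (b : ℤ) + 1) = (a, b + 1) := by
      rw [Prod.mk.injEq]; constructor <;> omega
    rw [e1, e2] at E2'; exact E2'.symm
  have E3 : G.Adj (a, b) (a + 1, b + 2) := by
    have e1 : ((a : ℤ), (b : ℤ) + 1 - 1) = (a, b) := by
      rw [Prod.mk.injEq]; constructor <;> omega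
    have e2 : ((a : ℤ) + 1, (b : ℤ) + 1 + 1) = (a + 1, b + 2) := by
      rw [Prod.mk.injEq]; constructor <;> omega
    rw [e1, e2] at E3'; exact E3'
  have E4 : G.Adj (a, b + 1) (a + 1, b - 1) := E4'.symm
  have ob_ab : OnBoard m n (a, b) := (hmoves _ _ E1).1
  have ob_ab1 : OnBoard m n (a, b + 1) := (hmoves _ _ E4).1
  -- the board and quadrant finsets
  set Bd : Finset (ℤ × ℤ) := (Finset.Icc 1 (m : ℤ)) ×ˢ (Finset.Icc 1 (n : ℤ)) with hBd
  have memBd : ∀ z : ℤ × ℤ, z ∈ Bd ↔ OnBoard m n z := by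
    intro z
    simp only [hBd, Finset.mem_product, Finset.mem_Icc, OnBoard]
    tauto
  set A : Finset (ℤ × ℤ) := Bd.filter (fun z => z.1 ≤ a - 1 ∧ z.2 ≤ b) with hA
  have memA : ∀ z : ℤ × ℤ, z ∈ A ↔ (z ∈ Bd ∧ z.1 ≤ a - 1 ∧ z.2 ≤ b) := by
    intro z; rw [hA]; exact Finset.mem_filter
  set U : Finset ((ℤ × ℤ) × (ℤ × ℤ)) := (A ×ˢ Bd).filter (fun x => G.Adj x.1 x.2) with hU
  have memU : ∀ x : (ℤ × ℤ) × (ℤ × ℤ),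
      x ∈ U ↔ (x.1 ∈ A ∧ x.2 ∈ Bd ∧ G.Adj x.1 x.2) := by
    intro x
    rw [hU, Finset.mem_filter, Finset.mem_product]
    tauto
  -- |U| = 2 |A|
  have hfib : ∀ p ∈ A, (U.filter (fun x => x.1 = p)).card = 2 := by
    intro p hpA
    have hpOn : OnBoard m n p := (memBd p).mp ((memA p).mp hpA).1
    have hset : U.filter (fun x => x.1 = p) = {p} ×ˢ (Bd.filter (fun q => G.Adj p q)) := by
      ext x
      constructor
      · intro hx
        rw [Finset.mem_filter, memU] at hx
        obtain ⟨⟨hxA, hxB, hadj⟩, hx1⟩ := hx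
        rw [Finset.mem_product, Finset.mem_singleton, Finset.mem_filter]
        exact ⟨hx1, hxB, by rw [← hx1]; exact hadj⟩
      · intro hx
        rw [Finset.mem_product, Finset.mem_singleton, Finset.mem_filter] at hx
        obtain ⟨hx1, hxB, hadj⟩ := hx
        rw [Finset.mem_filter, memU]
        exact ⟨⟨by rw [hx1]; exact hpA, hxB, by rw [hx1]; exact hadj⟩, hx1⟩
    rw [hset, Finset.card_product, Finset.card_singleton, one_mul]
    have hNS : G.neighborSet p = ↑(Bd.filter (fun q => G.Adj p q)) := by
      ext q
      simp only [SimpleGraph.mem_neighborSet, Finset.coe_filter, Set.mem_setOf_eq]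
      exact ⟨fun h => ⟨(memBd q).mpr (hmoves p q h).2.1, h⟩, fun h => h.2⟩
    have h2 := hdeg p hpOn
    rw [hNS, Set.ncard_coe_finset] at h2
    exact h2
  have hUcard : U.card = 2 * A.card := by
    rw [Finset.card_eq_sum_card_fiberwise
      (f := fun x => x.1) (t := A) (fun x hx => ((memU x).mp hx).1)]
    rw [Finset.sum_congr rfl hfib, Finset.sum_const, smul_eq_mul, mul_comm]
  -- split U by whether the second endpoint is in the quadrant
  set W : Finset ((ℤ × ℤ) × (ℤ × ℤ)) :=
    U.filter (fun x => x.2.1 ≤ a - 1 ∧ x.2.2 ≤ b) with hW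
  set T : Finset ((ℤ × ℤ) × (ℤ × ℤ)) :=
    U.filter (fun x => ¬ (x.2.1 ≤ a - 1 ∧ x.2.2 ≤ b)) with hT
  have hWT : W.card + T.card = U.card := by
    rw [hW, hT]
    exact Finset.card_filter_add_card_filter_not _
  -- W is even via the swap involution
  have hWeven : Even W.card := by
    refine even_card_invol W.card W (fun x => (x.2, x.1)) le_rfl ?_ ?_ ?_
    · intro x hx
      rw [hW, Finset.mem_filter, memU] at hx
      obtain ⟨⟨hxA, hxB, hadj⟩, hq⟩ := hx
      rw [hW, Finset.mem_filter, memU]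
      obtain ⟨hx1B, hx1Q⟩ := (memA x.1).mp hxA
      exact ⟨⟨(memA x.2).mpr ⟨hxB, hq⟩, hx1B, hadj.symm⟩, hx1Q⟩
    · intro x _; rfl
    · intro x hx heq
      rw [hW, Finset.mem_filter, memU] at hx
      have h1 : x.2 = x.1 := congrArg Prod.fst heq
      exact hx.1.2.2.ne h1.symm
  -- the special crossing pair
  set xhat : (ℤ × ℤ) × (ℤ × ℤ) := ((a - 1, b), (a + 1, b + 1)) with hxhat
  have hxhatT : xhat ∈ T := by
    rw [hT, Finset.mem_filter, memU, hxhat]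
    refine ⟨⟨(memA _).mpr ⟨(memBd _).mpr (hmoves _ _ Ehat).1, ?_⟩,
      (memBd _).mpr (hmoves _ _ Ehat).2.1, Ehat⟩, ?_⟩
    · show (a - 1 : ℤ) ≤ a - 1 ∧ (b : ℤ) ≤ b
      constructor <;> omega
    · show ¬ ((a + 1 : ℤ) ≤ a - 1 ∧ (b + 1 : ℤ) ≤ b)
      omega
  set T' : Finset ((ℤ × ℤ) × (ℤ × ℤ)) := T.erase xhat with hT'
  have hT'card : T'.card + 1 = T.card := by
    rw [hT']; exact Finset.card_erase_add_one hxhatT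
  have memT' : ∀ p1 p2 q1 q2 : ℤ, ((p1, p2), (q1, q2)) ∈ T' ↔
      (((p1, p2) : ℤ × ℤ) ∈ Bd ∧ p1 ≤ a - 1 ∧ p2 ≤ b) ∧ ((q1, q2) : ℤ × ℤ) ∈ Bd ∧
        G.Adj (p1, p2) (q1, q2) ∧ ¬ (q1 ≤ a - 1 ∧ q2 ≤ b) ∧
        (((p1, p2), (q1, q2)) : (ℤ × ℤ) × (ℤ × ℤ)) ≠ xhat := by
    intro p1 p2 q1 q2
    rw [hT', Finset.mem_erase, hT, Finset.mem_filter, memU]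
    constructor
    · rintro ⟨hne, ⟨hA1, hB2, hadj⟩, hq⟩
      obtain ⟨hB1, hQQ⟩ := (memA _).mp hA1
      exact ⟨⟨hB1, hQQ⟩, hB2, hadj, hq, hne⟩
    · rintro ⟨⟨hB1, hQQ⟩, hB2, hadj, hq, hne⟩
      exact ⟨hne, ⟨(memA _).mpr ⟨hB1, hQQ⟩, hB2, hadj⟩, hq⟩
  -- the partner involution on T'
  have hmixadj : ∀ p1 p2 q1 q2 : ℤ, G.Adj (p1, p2) (q1, q2) →
      G.Adj (p1, q2) (q1, p2) := by
    intro p1 p2 q1 q2 hadj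
    have hd := (hmoves _ _ hadj).2.2
    obtain ⟨r, s, hrs, hnePair, hsum⟩ := hcross _ _ hadj
    have he := (hmoves _ _ hrs).2.2
    rcases partner_eq hd he hsum hnePair with ⟨hr, hs⟩ | ⟨hr, hs⟩
    · rw [hr, hs] at hrs; exact hrs
    · rw [hr, hs] at hrs; exact hrs.symm
  have hT'even : Even T'.card := by
    refine even_card_invol T'.card T' (sigmaFn a b) le_rfl ?_ ?_ ?_
    · -- σ maps T' to T'
      rintro ⟨⟨p1, p2⟩, ⟨q1, q2⟩⟩ hx
      rw [memT'] at hx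
      obtain ⟨⟨hpB, hp1, hp2⟩, hqB, hadj, hnQq, hnxhat⟩ := hx
      have hmix := hmixadj _ _ _ _ hadj
      have hm1B : ((p1, q2) : ℤ × ℤ) ∈ Bd := (memBd _).mpr (hmoves _ _ hmix).1
      have hm2B : ((q1, p2) : ℤ × ℤ) ∈ Bd := (memBd _).mpr (hmoves _ _ hmix).2.1
      rw [sigmaFn_mk]
      by_cases hQm1 : p1 ≤ a - 1 ∧ q2 ≤ b
      · rw [if_pos hQm1, memT']
        refine ⟨⟨hm1B, hQm1.1, hQm1.2⟩, hm2B, hmix, ?_, ?_⟩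
        · rintro ⟨hh1, _⟩
          exact hnQq ⟨hh1, hQm1.2⟩
        · intro heq
          rw [hxhat, Prod.mk.injEq, Prod.mk.injEq, Prod.mk.injEq] at heq
          omega
      · -- we must show the other mixed square is in the quadrant
        have hQm2 : q1 ≤ a - 1 ∧ p2 ≤ b := by
          by_contra hnQm2
          have hd := (hmoves _ _ hadj).2.2
          rw [knight_iff] at hd
          simp only [Prod.mk_sub_mk] at hd
          have hcase : (p1 = a - 1 ∧ p2 = b - 1 ∧ q1 = a ∧ q2 = b + 1) ∨
              (p1 = a - 1 ∧ p2 = b ∧ q1 = a ∧ q2 = b + 2) ∨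
              (p1 = a - 2 ∧ p2 = b ∧ q1 = a ∧ q2 = b + 1) ∨
              (p1 = a - 1 ∧ p2 = b ∧ q1 = a + 1 ∧ q2 = b + 1) := by omega
          rcases hcase with ⟨e1, e2, e3, e4⟩ | ⟨e1, e2, e3, e4⟩ |
            ⟨e1, e2, e3, e4⟩ | ⟨e1, e2, e3, e4⟩ <;> subst e1 <;> subst e2 <;>
            subst e3 <;> subst e4
          · exact deg_le hdeg ob_ab1 E4 E2 hadj.symm
              (by rw [Ne, Prod.mk.injEq]; omega)
              (by rw [Ne, Prod.mk.injEq]; omega)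
              (by rw [Ne, Prod.mk.injEq]; omega)
          · exact deg_le hdeg ob_ab E3 E1 hmix.symm
              (by rw [Ne, Prod.mk.injEq]; omega)
              (by rw [Ne, Prod.mk.injEq]; omega)
              (by rw [Ne, Prod.mk.injEq]; omega)
          · exact deg_le hdeg ob_ab1 E4 E2 hadj.symm
              (by rw [Ne, Prod.mk.injEq]; omega)
              (by rw [Ne, Prod.mk.injEq]; omega)
              (by rw [Ne, Prod.mk.injEq]; omega)
          · exact hnxhat (by rw [hxhat])
        rw [if_neg hQm1, memT']
        refine ⟨⟨hm2B, hQm2.1, hQm2.2⟩, hm1B, hmix.symm, hQm1, ?_⟩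
        intro heq
        rw [hxhat, Prod.mk.injEq, Prod.mk.injEq, Prod.mk.injEq] at heq
        omega
    · -- involutive
      rintro ⟨⟨p1, p2⟩, ⟨q1, q2⟩⟩ hx
      rw [memT'] at hx
      obtain ⟨⟨hpB, hp1, hp2⟩, hqB, hadj, hnQq, hnxhat⟩ := hx
      by_cases hQm1 : p1 ≤ a - 1 ∧ q2 ≤ b
      · have e : sigmaFn a b ((p1, p2), (q1, q2)) = ((p1, q2), (q1, p2)) := by
          rw [sigmaFn_mk, if_pos hQm1]
        rw [e, sigmaFn_mk, if_pos ⟨hp1, hp2⟩]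
      · have e : sigmaFn a b ((p1, p2), (q1, q2)) = ((q1, p2), (p1, q2)) := by
          rw [sigmaFn_mk, if_neg hQm1]
        rw [e, sigmaFn_mk, if_neg hnQq]
    · -- no fixed point
      rintro ⟨⟨p1, p2⟩, ⟨q1, q2⟩⟩ hx
      rw [memT'] at hx
      obtain ⟨⟨hpB, hp1, hp2⟩, hqB, hadj, hnQq, hnxhat⟩ := hx
      have hd := (hmoves _ _ hadj).2.2
      rw [knight_iff] at hd
      simp only [Prod.mk_sub_mk] at hd
      rw [sigmaFn_mk]
      by_cases hQm1 : p1 ≤ a - 1 ∧ q2 ≤ b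
      · rw [if_pos hQm1, Ne, Prod.mk.injEq, Prod.mk.injEq, Prod.mk.injEq]
        omega
      · rw [if_neg hQm1, Ne, Prod.mk.injEq, Prod.mk.injEq, Prod.mk.injEq]
        omega
  -- final contradiction
  obtain ⟨k1, e1⟩ := hWeven
  obtain ⟨k2, e2⟩ := hT'even
  omega
end

section
/- No open crosspatch knight tour exists on any m×n rectangular board: there is no Hamiltonian path in the knight graph of the m×n board all of whose edges form a central cross with another edge of the path. -/
/- ### Auxiliary lemmas -/

lemma eq_of_diff_eq {p q r s : ℤ × ℤ} (hA : q - p = s - r) (hB : p + q = r + s) :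
    p = r ∧ q = s := by
  have h1 := congrArg Prod.fst hA; have h2 := congrArg Prod.snd hA
  have h3 := congrArg Prod.fst hB; have h4 := congrArg Prod.snd hB
  simp only [Prod.fst_sub, Prod.snd_sub, Prod.fst_add, Prod.snd_add] at h1 h2 h3 h4
  refine ⟨Prod.ext_iff.mpr ⟨by omega, by omega⟩, Prod.ext_iff.mpr ⟨by omega, by omega⟩⟩

lemma diff_ne {p q r s : ℤ × ℤ} (hB : p + q = r + s)
    (hne : ({p, q} : Set (ℤ × ℤ)) ≠ {r, s}) :
    q - p ≠ s - r ∧ q - p ≠ -(s - r) := by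
  constructor
  · intro h
    obtain ⟨h1, h2⟩ := eq_of_diff_eq h hB
    exact hne (by rw [h1, h2])
  · intro h
    have h' : q - p = r - s := by rw [h, neg_sub]
    obtain ⟨h1, h2⟩ := eq_of_diff_eq h' (hB.trans (add_comm r s))
    exact hne (by rw [h1, h2, Set.pair_comm])

/-- Pigeonhole: three knight-move differences with pairwise even differences must
contain two that are equal up to sign. -/
lemma pigeonE (a1 b1 a2 b2 a3 b3 : ℤ)
    (k1 : (|a1| = 1 ∧ |b1| = 2) ∨ (|a1| = 2 ∧ |b1| = 1))
    (k2 : (|a2| = 1 ∧ |b2| = 2) ∨ (|a2| = 2 ∧ |b2| = 1))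
    (k3 : (|a3| = 1 ∧ |b3| = 2) ∨ (|a3| = 2 ∧ |b3| = 1))
    (p2a : 2 ∣ a2 - a1) (p2b : 2 ∣ b2 - b1) (p3a : 2 ∣ a3 - a1) (p3b : 2 ∣ b3 - b1)
    (ne12 : ¬(a1 = a2 ∧ b1 = b2)) (ne12' : ¬(a1 = -a2 ∧ b1 = -b2))
    (ne13 : ¬(a1 = a3 ∧ b1 = b3)) (ne13' : ¬(a1 = -a3 ∧ b1 = -b3))
    (ne23 : ¬(a2 = a3 ∧ b2 = b3)) (ne23' : ¬(a2 = -a3 ∧ b2 = -b3)) : False := by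
  simp only [Int.abs_eq_natAbs] at k1 k2 k3
  omega

/-- Three pairwise distinct knight edges cannot all have the same endpoint sum. -/
lemma knightB (p q r s u v : ℤ × ℤ)
    (h1 : IsKnightDiff (q - p)) (h2 : IsKnightDiff (s - r)) (h3 : IsKnightDiff (v - u))
    (e1 : p + q = r + s) (e2 : p + q = u + v)
    (n1 : ({p, q} : Set (ℤ × ℤ)) ≠ {r, s}) (n2 : ({p, q} : Set (ℤ × ℤ)) ≠ {u, v})
    (n3 : ({r, s} : Set (ℤ × ℤ)) ≠ {u, v}) : False := by
  have e3 : r + s = u + v := e1.symm.trans e2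
  obtain ⟨d12, d12'⟩ := diff_ne e1 n1
  obtain ⟨d13, d13'⟩ := diff_ne e2 n2
  obtain ⟨d23, d23'⟩ := diff_ne e3 n3
  have e1a : p.1 + q.1 = r.1 + s.1 := congrArg Prod.fst e1
  have e1b : p.2 + q.2 = r.2 + s.2 := congrArg Prod.snd e1
  have e2a : p.1 + q.1 = u.1 + v.1 := congrArg Prod.fst e2
  have e2b : p.2 + q.2 = u.2 + v.2 := congrArg Prod.snd e2
  have np : ∀ x y : ℤ × ℤ, x ≠ y → ¬(x.1 = y.1 ∧ x.2 = y.2) := by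
    intro x y hxy ⟨ha, hb⟩; exact hxy (Prod.ext_iff.mpr ⟨ha, hb⟩)
  have m12 := np _ _ d12; have m12' := np _ _ d12'
  have m13 := np _ _ d13; have m13' := np _ _ d13'
  have m23 := np _ _ d23; have m23' := np _ _ d23'
  simp only [Prod.fst_sub, Prod.snd_sub, Prod.fst_neg, Prod.snd_neg] at m12 m12' m13 m13' m23 m23'
  exact pigeonE (q.1 - p.1) (q.2 - p.2) (s.1 - r.1) (s.2 - r.2) (v.1 - u.1) (v.2 - u.2)
    h1 h2 h3
    ⟨p.1 - r.1, by omega⟩ ⟨p.2 - r.2, by omega⟩ ⟨p.1 - u.1, by omega⟩ ⟨p.2 - u.2, by omega⟩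
    m12 m12' m13 m13' m23 m23'

/-- Key local computation in `ZMod 2`: the change of side with respect to the line
`x = k + 1/2` along a move whose x-displacement is `±1` or `±2` is determined by the
sum of the two x-coordinates. -/
lemma chi_step (k a b : ℤ) (h : |b - a| = 1 ∨ |b - a| = 2) :
    ((if b ≤ k then (0 : ZMod 2) else 1) - (if a ≤ k then (0 : ZMod 2) else 1)) =
      (if a + b = 2 * k ∨ a + b = 2 * k + 1 ∨ a + b = 2 * k + 2 then (1 : ZMod 2) else 0) := by
  have h' : b - a = 1 ∨ b - a = -1 ∨ b - a = 2 ∨ b - a = -2 := by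
    rcases h with h | h
    · rcases (abs_eq (by norm_num : (0:ℤ) ≤ 1)).mp h with h | h <;> omega
    · rcases (abs_eq (by norm_num : (0:ℤ) ≤ 2)).mp h with h | h <;> omega
  split_ifs <;> first | decide | (exfalso; omega)

/-- Telescoping plus vanishing of all fiberwise sums of edge-sums forces the two
endpoints to lie on the same side of every line, hence to have equal coordinate. -/
lemma coord_eq (L : ℕ) (g : ℕ → ℤ) (s : ℕ → ℤ × ℤ)
    (hg : ∀ i < L, |g (i + 1) - g i| = 1 ∨ |g (i + 1) - g i| = 2)
    (hgs : ∀ i < L, (s i).1 = g i + g (i + 1))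
    (hsum0 : ∀ τ : ℤ × ℤ → ZMod 2, ∑ i ∈ Finset.range L, τ (s i) = 0) :
    g L = g 0 := by
  have key : ∀ k : ℤ, (g L ≤ k ↔ g 0 ≤ k) := by
    intro k
    have step : ∀ i ∈ Finset.range L,
        ((if g (i + 1) ≤ k then (0 : ZMod 2) else 1) - (if g i ≤ k then (0 : ZMod 2) else 1)) =
        (fun b : ℤ × ℤ =>
          if b.1 = 2 * k ∨ b.1 = 2 * k + 1 ∨ b.1 = 2 * k + 2 then (1 : ZMod 2) else 0) (s i) := by
      intro i hi
      rw [Finset.mem_range] at hi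
      have := chi_step k (g i) (g (i + 1)) (hg i hi)
      simpa [hgs i hi] using this
    have main0 : (if g L ≤ k then (0 : ZMod 2) else 1) - (if g 0 ≤ k then (0 : ZMod 2) else 1)
        = 0 := by
      calc (if g L ≤ k then (0 : ZMod 2) else 1) - (if g 0 ≤ k then (0 : ZMod 2) else 1)
          = ∑ i ∈ Finset.range L,
              ((if g (i + 1) ≤ k then (0 : ZMod 2) else 1) -
                (if g i ≤ k then (0 : ZMod 2) else 1)) :=
            (Finset.sum_range_sub (fun i => if g i ≤ k then (0 : ZMod 2) else 1) L).symm
        _ = ∑ i ∈ Finset.range L, (fun b : ℤ × ℤ =>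
              if b.1 = 2 * k ∨ b.1 = 2 * k + 1 ∨ b.1 = 2 * k + 2 then (1 : ZMod 2) else 0)
              (s i) := Finset.sum_congr rfl step
        _ = 0 := hsum0 (fun b : ℤ × ℤ =>
              if b.1 = 2 * k ∨ b.1 = 2 * k + 1 ∨ b.1 = 2 * k + 2 then (1 : ZMod 2) else 0)
    have heq := sub_eq_zero.mp main0
    by_cases hA : g L ≤ k <;> by_cases hB : g 0 ≤ k <;>
      simp [hA, hB] at heq ⊢
  have h1 := (key (g 0)).mpr le_rfl
  have h2 := (key (g L)).mp le_rfl
  omega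

/-- No open crosspatch knight tour exists on a rectangular board: there is no
Hamiltonian knight path visiting all m·n squares in which every move forms a central
cross with another move of the path. -/
theorem no_open_crosspatch_tour (m n : ℕ) (hmn : 1 < m * n) :
    ¬ ∃ f : ℕ → ℤ × ℤ,
      (∀ i j, i < m * n → j < m * n → f i = f j → i = j) ∧
      (∀ p, OnBoard m n p → ∃ i, i < m * n ∧ f i = p) ∧
      (∀ i, i + 1 < m * n → IsKnightDiff (f (i + 1) - f i)) ∧
      (∀ i, i + 1 < m * n → ∃ j, j + 1 < m * n ∧
        ({f i, f (i + 1)} : Set (ℤ × ℤ)) ≠ {f j, f (j + 1)} ∧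
        f i + f (i + 1) = f j + f (j + 1)) := by
  rintro ⟨f, hinj, -, hknight, hcross⟩
  set L : ℕ := m * n - 1 with hLdef
  have hdist : ∀ i j : ℕ, i < L → j < L → i ≠ j →
      ({f i, f (i + 1)} : Set (ℤ × ℤ)) ≠ {f j, f (j + 1)} := by
    intro i j hi hj hij h
    rw [Set.pair_eq_pair_iff] at h
    rcases h with ⟨h1, h2⟩ | ⟨h1, h2⟩
    · exact hij (hinj i j (by omega) (by omega) h1)
    · have a1 := hinj i (j + 1) (by omega) (by omega) h1
      have a2 := hinj (i + 1) j (by omega) (by omega) h2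
      omega
  have hfib : ∀ b ∈ (Finset.range L).image (fun i => f i + f (i + 1)),
      ((Finset.range L).filter (fun i => f i + f (i + 1) = b)).card = 2 := by
    intro b hb
    obtain ⟨i, hi, hsi⟩ := Finset.mem_image.mp hb
    rw [Finset.mem_range] at hi
    obtain ⟨j, hjN, hne, hsum⟩ := hcross i (by omega)
    have hjL : j < L := by omega
    have hij : i ≠ j := fun h => hne (by rw [h])
    have hset : (Finset.range L).filter (fun i => f i + f (i + 1) = b) = {i, j} := by
      ext k
      simp only [Finset.mem_filter, Finset.mem_range, Finset.mem_insert, Finset.mem_singleton]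
      constructor
      · rintro ⟨hkL, hsk⟩
        by_contra hk
        push_neg at hk
        exact knightB (f i) (f (i + 1)) (f j) (f (j + 1)) (f k) (f (k + 1))
          (hknight i (by omega)) (hknight j hjN) (hknight k (by omega))
          hsum (hsi.trans hsk.symm)
          hne (hdist i k hi hkL hk.1.symm) (hdist j k hjL hkL hk.2.symm)
      · rintro (rfl | rfl)
        · exact ⟨hi, hsi⟩
        · exact ⟨hjL, hsum.symm.trans hsi⟩
    rw [hset, Finset.card_insert_of_notMem (by simpa using hij), Finset.card_singleton]
  have hsum0 : ∀ τ : ℤ × ℤ → ZMod 2,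
      ∑ i ∈ Finset.range L, τ (f i + f (i + 1)) = 0 := by
    intro τ
    have hz : ∀ x : ZMod 2, 2 • x = 0 := by decide
    calc ∑ i ∈ Finset.range L, τ (f i + f (i + 1))
        = ∑ b ∈ (Finset.range L).image (fun i => f i + f (i + 1)),
            ((Finset.range L).filter (fun i => f i + f (i + 1) = b)).card • τ b :=
          Finset.sum_comp τ (fun i => f i + f (i + 1))
      _ = 0 := Finset.sum_eq_zero (fun b hb => by rw [hfib b hb]; exact hz (τ b))
  have hg1 : ∀ i < L, |(f (i + 1)).1 - (f i).1| = 1 ∨ |(f (i + 1)).1 - (f i).1| = 2 := by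
    intro i hi
    rcases hknight i (by omega) with ⟨h1, -⟩ | ⟨h1, -⟩
    · left; simpa using h1
    · right; simpa using h1
  have hg2 : ∀ i < L, |(f (i + 1)).2 - (f i).2| = 1 ∨ |(f (i + 1)).2 - (f i).2| = 2 := by
    intro i hi
    rcases hknight i (by omega) with ⟨-, h1⟩ | ⟨-, h1⟩
    · right; simpa using h1
    · left; simpa using h1
  have hx : (f L).1 = (f 0).1 :=
    coord_eq L (fun i => (f i).1) (fun i => f i + f (i + 1)) hg1
      (fun i _ => by simp) hsum0
  have hy : (f L).2 = (f 0).2 :=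
    coord_eq L (fun i => (f i).2) (fun i => Prod.swap (f i + f (i + 1))) hg2
      (fun i _ => by simp) (fun τ => hsum0 (fun b => τ b.swap))
  have hfe : f 0 = f L := Prod.ext_iff.mpr ⟨hx.symm, hy.symm⟩
  have h0L := hinj 0 L (by omega) (by omega) hfe
  omega
end

section
/- Let G be a crosspatch knight pseudotour on a rectangular board. For each square s, at least one of the four corner vertices of s is incident to a red board edge, where a board edge is red if its midpoint is the center of some cross of G. -/
/-- In a crosspatch knight pseudotour, every square has at least one of its four
corner grid vertices incident to a red board edge. -/
theorem corner_incident_to_red (m n : ℕ) (G : SimpleGraph (ℤ × ℤ))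
    (hmoves : ∀ p q, G.Adj p q → OnBoard m n p ∧ OnBoard m n q ∧ IsKnightDiff (p - q))
    (hdeg : ∀ p, OnBoard m n p → (G.neighborSet p).ncard = 2)
    (hcross : ∀ p q, G.Adj p q → ∃ r s, G.Adj r s ∧
      ({p, q} : Set (ℤ × ℤ)) ≠ {r, s} ∧ p + q = r + s)
    (s : ℤ × ℤ) (hs : OnBoard m n s) :
    ∃ v w : ℤ × ℤ,
      v ∈ ({s - (1, 1), (s.1, s.2 - 1), (s.1 - 1, s.2), s} : Set (ℤ × ℤ)) ∧
      IsUnitStep (w - v) ∧ Red G v w := by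

  -- `s` has a neighbor since its degree is 2
  have hne0 : (G.neighborSet s).ncard ≠ 0 := by rw [hdeg s hs]; norm_num
  obtain ⟨q, hq⟩ := Set.nonempty_of_ncard_ne_zero hne0
  have hq' : G.Adj s q := hq
  obtain ⟨r, t, hrt, hnet, hsum⟩ := hcross s q hq'
  have hk := (hmoves s q hq').2.2
  have h1 : (s - q).1 = s.1 - q.1 := rfl
  have h2 : (s - q).2 = s.2 - q.2 := rfl
  rcases hk with ⟨ha, hb⟩ | ⟨ha, hb⟩ <;>
    rw [h1, abs_eq (by norm_num : (0:ℤ) ≤ _)] at ha <;>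
    rw [h2, abs_eq (by norm_num : (0:ℤ) ≤ _)] at hb <;>
    rcases ha with ha | ha <;> rcases hb with hb | hb
  -- d = q - s in each case; pick corner v and neighbor w
  · -- s - q = (1,2), q = s + (-1,-2)
    exact ⟨(s.1 - 1, s.2 - 1), (s.1 - 1, s.2 - 2), by left; simp [Prod.ext_iff],
      by right; constructor <;> simp [Prod.ext_iff],
      s, q, r, t, hq', hrt, hnet, hsum, by simp [Prod.ext_iff]; omega⟩
  · -- s - q = (1,-2), q = s + (-1,2)
    exact ⟨(s.1 - 1, s.2), (s.1 - 1, s.2 + 1), by right; right; left; simp [Prod.ext_iff],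
      by right; constructor <;> simp [Prod.ext_iff],
      s, q, r, t, hq', hrt, hnet, hsum, by simp [Prod.ext_iff]; omega⟩
  · -- s - q = (-1,2), q = s + (1,-2)
    exact ⟨(s.1, s.2 - 1), (s.1, s.2 - 2), by right; left; simp [Prod.ext_iff],
      by right; constructor <;> simp [Prod.ext_iff],
      s, q, r, t, hq', hrt, hnet, hsum, by simp [Prod.ext_iff]; omega⟩
  · -- s - q = (-1,-2), q = s + (1,2)
    exact ⟨(s.1, s.2), (s.1, s.2 + 1), by right; right; right; simp [Prod.ext_iff],
      by right; constructor <;> simp [Prod.ext_iff],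
      s, q, r, t, hq', hrt, hnet, hsum, by simp [Prod.ext_iff]; omega⟩
  · -- s - q = (2,1), q = s + (-2,-1)
    exact ⟨(s.1 - 1, s.2 - 1), (s.1 - 2, s.2 - 1), by left; simp [Prod.ext_iff],
      by left; constructor <;> simp [Prod.ext_iff],
      s, q, r, t, hq', hrt, hnet, hsum, by simp [Prod.ext_iff]; omega⟩
  · -- s - q = (2,-1), q = s + (-2,1)
    exact ⟨(s.1 - 1, s.2), (s.1 - 2, s.2), by right; right; left; simp [Prod.ext_iff],
      by left; constructor <;> simp [Prod.ext_iff],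
      s, q, r, t, hq', hrt, hnet, hsum, by simp [Prod.ext_iff]; omega⟩
  · -- s - q = (-2,1), q = s + (2,-1)
    exact ⟨(s.1, s.2 - 1), (s.1 + 1, s.2 - 1), by right; left; simp [Prod.ext_iff],
      by left; constructor <;> simp [Prod.ext_iff],
      s, q, r, t, hq', hrt, hnet, hsum, by simp [Prod.ext_iff]; omega⟩
  · -- s - q = (-2,-1), q = s + (2,1)
    exact ⟨(s.1, s.2), (s.1 + 1, s.2), by right; right; right; simp [Prod.ext_iff],
      by left; constructor <;> simp [Prod.ext_iff],
      s, q, r, t, hq', hrt, hnet, hsum, by simp [Prod.ext_iff]; omega⟩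
end

section
/- Summing the incidence count over all squares in a rectangle: if α assigns 0/1 weights to the unit board edges of an m×n board with α vanishing on edges incident to boundary grid vertices, and if for every square s the eight board edges surrounding s's corners (as in the crosspatch setup) have α-values summing to 2, then for every interior grid vertex u the sum α(N(u)) + α(E(u)) + α(S(u)) + α(W(u)) is even. -/
def dsum (α : ℤ × ℤ → ℤ × ℤ → ℕ) (u : ℤ × ℤ) : ℕ :=
  α u (u + (0, 1)) + α u (u + (1, 0)) + α u (u - (0, 1)) + α u (u - (1, 0))

lemma sq_even (α : ℤ × ℤ → ℤ × ℤ → ℕ) (hsymm : ∀ v w, α v w = α w v) (s : ℤ × ℤ)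
    (h8 : α s (s + (1, 0)) + α s (s + (0, 1)) +
      α (s - (1, 0)) (s - (1, 0) + (0, 1)) + α (s - (1, 0)) (s - (1, 0) - (1, 0)) +
      α (s - (1, 1)) (s - (1, 1) - (1, 0)) + α (s - (1, 1)) (s - (1, 1) - (0, 1)) +
      α (s - (0, 1)) (s - (0, 1) - (0, 1)) + α (s - (0, 1)) (s - (0, 1) + (1, 0)) = 2) :
    Even (dsum α s + dsum α (s - (1, 0)) + dsum α (s - (1, 1)) + dsum α (s - (0, 1))) := by
  have e1 : s - (1, 0) + (1, 0) = s := by ring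
  have e2 : s - (1, 0) - (0, 1) = s - (1, 1) := by simp [Prod.ext_iff]
  have e3 : s - (1, 1) + (0, 1) = s - (1, 0) := by simp [Prod.ext_iff]
  have e4 : s - (1, 1) + (1, 0) = s - (0, 1) := by simp [Prod.ext_iff]
  have e5 : s - (0, 1) + (0, 1) = s := by ring
  have e6 : s - (0, 1) - (1, 0) = s - (1, 1) := by simp [Prod.ext_iff]
  have key : dsum α s + dsum α (s - (1, 0)) + dsum α (s - (1, 1)) + dsum α (s - (0, 1)) =
      (α s (s + (1, 0)) + α s (s + (0, 1)) +
      α (s - (1, 0)) (s - (1, 0) + (0, 1)) + α (s - (1, 0)) (s - (1, 0) - (1, 0)) +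
      α (s - (1, 1)) (s - (1, 1) - (1, 0)) + α (s - (1, 1)) (s - (1, 1) - (0, 1)) +
      α (s - (0, 1)) (s - (0, 1) - (0, 1)) + α (s - (0, 1)) (s - (0, 1) + (1, 0))) +
      (α s (s - (0, 1)) + α s (s - (0, 1)) + (α s (s - (1, 0)) + α s (s - (1, 0))) +
        (α (s - (1, 0)) (s - (1, 1)) + α (s - (1, 0)) (s - (1, 1))) +
        (α (s - (1, 1)) (s - (0, 1)) + α (s - (1, 1)) (s - (0, 1)))) := by
    simp only [dsum, e1, e2, e3, e4, e5, e6]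
    rw [hsymm (s - (1, 0)) s, hsymm (s - (0, 1)) s, hsymm (s - (1, 1)) (s - (1, 0)),
      hsymm (s - (0, 1)) (s - (1, 1))]
    ac_rfl
  rw [key, h8]
  exact ⟨1 + (α s (s - (0, 1)) + α s (s - (1, 0)) +
        α (s - (1, 0)) (s - (1, 1)) + α (s - (1, 1)) (s - (0, 1))), by ring⟩

lemma even_dsum (m n : ℕ) (α : ℤ × ℤ → ℤ × ℤ → ℕ)
    (hsymm : ∀ v w, α v w = α w v)
    (hbdry : ∀ v w, (v.1 = 0 ∨ v.1 = (m : ℤ) ∨ v.2 = 0 ∨ v.2 = (n : ℤ)) → α v w = 0)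
    (hsq : ∀ s : ℤ × ℤ, OnBoard m n s →
      α s (s + (1, 0)) + α s (s + (0, 1)) +
      α (s - (1, 0)) (s - (1, 0) + (0, 1)) + α (s - (1, 0)) (s - (1, 0) - (1, 0)) +
      α (s - (1, 1)) (s - (1, 1) - (1, 0)) + α (s - (1, 1)) (s - (1, 1) - (0, 1)) +
      α (s - (0, 1)) (s - (0, 1) - (0, 1)) + α (s - (0, 1)) (s - (0, 1) + (1, 0)) = 2) :
    ∀ N : ℕ, ∀ u : ℤ × ℤ, 0 ≤ u.1 → u.1 ≤ (m : ℤ) → 0 ≤ u.2 → u.2 ≤ (n : ℤ) →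
      u.1 + u.2 ≤ (N : ℤ) → Even (dsum α u) := by
  intro N
  induction N with
  | zero =>
    intro u h1 h2 h3 h4 h5
    have : u.1 = 0 := by omega
    simp [dsum, hbdry u _ (Or.inl this)]
  | succ N ih =>
    intro u h1 h2 h3 h4 h5
    by_cases hb : u.1 = 0 ∨ u.1 = (m : ℤ) ∨ u.2 = 0 ∨ u.2 = (n : ℤ)
    · simp [dsum, hbdry u _ hb]
    · push_neg at hb
      obtain ⟨hb1, hb2, hb3, hb4⟩ := hb
      have hB := ih (u - (1, 0)) (by simp; omega) (by simp; omega) (by simp; omega)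
        (by simp; omega) (by simp; omega)
      have hC := ih (u - (1, 1)) (by simp; omega) (by simp; omega) (by simp; omega)
        (by simp; omega) (by simp; omega)
      have hD := ih (u - (0, 1)) (by simp; omega) (by simp; omega) (by simp; omega)
        (by simp; omega) (by simp; omega)
      have hall := sq_even α hsymm u (hsq u ⟨by omega, by omega, by omega, by omega⟩)
      rw [Nat.even_iff] at *
      omega

/-- If a 0/1 edge-weight α on the board edges vanishes on edges incident to boundary
grid vertices and sums to 2 over the eight edges surrounding each square's corners,
then the total weight of the four edges at any interior grid vertex is even. -/
theorem interior_vertex_even_weight (m n : ℕ) (α : ℤ × ℤ → ℤ × ℤ → ℕ)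
    (hsymm : ∀ v w, α v w = α w v)
    (hle : ∀ v w, α v w ≤ 1)
    (hsupp : ∀ v w, α v w ≠ 0 → IsUnitStep (w - v) ∧ InGrid m n v ∧ InGrid m n w)
    (hbdry : ∀ v w, (v.1 = 0 ∨ v.1 = (m : ℤ) ∨ v.2 = 0 ∨ v.2 = (n : ℤ)) → α v w = 0)
    (hsq : ∀ s : ℤ × ℤ, OnBoard m n s →
      α s (s + (1, 0)) + α s (s + (0, 1)) +
      α (s - (1, 0)) (s - (1, 0) + (0, 1)) + α (s - (1, 0)) (s - (1, 0) - (1, 0)) +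
      α (s - (1, 1)) (s - (1, 1) - (1, 0)) + α (s - (1, 1)) (s - (1, 1) - (0, 1)) +
      α (s - (0, 1)) (s - (0, 1) - (0, 1)) + α (s - (0, 1)) (s - (0, 1) + (1, 0)) = 2)
    (u : ℤ × ℤ) (hu : 0 < u.1 ∧ u.1 < (m : ℤ) ∧ 0 < u.2 ∧ u.2 < (n : ℤ)) :
    Even (α u (u + (0, 1)) + α u (u + (1, 0)) + α u (u - (0, 1)) + α u (u - (1, 0))) := by
  obtain ⟨h1, h2, h3, h4⟩ := hu
  exact even_dsum m n α hsymm hbdry hsq (u.1 + u.2).toNat u (by omega) (by omega)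
    (by omega) (by omega) (by omega)
end

section
/- On the 3×3 board with the central square removed, the eight remaining squares admit a closed knight tour, and this tour is crosspatch: every one of its eight knight moves forms a central cross with another move of the tour. -/
def tourF : ZMod 8 → ℤ × ℤ := fun i =>
  match i.val with
  | 0 => (1, 1)
  | 1 => (2, 3)
  | 2 => (3, 1)
  | 3 => (1, 2)
  | 4 => (3, 3)
  | 5 => (2, 1)
  | 6 => (1, 3)
  | _ => (3, 2)

lemma t0 : tourF 0 = (1, 1) := rfl
lemma t1 : tourF 1 = (2, 3) := rfl
lemma t2 : tourF 2 = (3, 1) := rfl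
lemma t3 : tourF 3 = (1, 2) := rfl
lemma t4 : tourF 4 = (3, 3) := rfl
lemma t5 : tourF 5 = (2, 1) := rfl
lemma t6 : tourF 6 = (1, 3) := rfl
lemma t7 : tourF 7 = (3, 2) := rfl

/-- The eight squares of the 3×3 board minus its center admit a closed knight tour
which is crosspatch: every move forms a central cross with another move of the tour. -/
theorem ring_board_crosspatch_tour :
    ∃ f : ZMod 8 → ℤ × ℤ,
      Function.Injective f ∧
      Set.range f = {p : ℤ × ℤ | 1 ≤ p.1 ∧ p.1 ≤ 3 ∧ 1 ≤ p.2 ∧ p.2 ≤ 3 ∧ p ≠ (2, 2)} ∧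
      (∀ i : ZMod 8, IsKnightDiff (f (i + 1) - f i)) ∧
      (∀ i : ZMod 8, ∃ j : ZMod 8,
        ({f i, f (i + 1)} : Set (ℤ × ℤ)) ≠ {f j, f (j + 1)} ∧
        f i + f (i + 1) = f j + f (j + 1)) := by
  refine ⟨tourF, ?_, ?_, ?_, ?_⟩
  · decide
  · ext p
    simp only [Set.mem_range, Set.mem_setOf_eq]
    constructor
    · rintro ⟨i, rfl⟩
      fin_cases i <;> simp [t0, t1, t2, t3, t4, t5, t6, t7, Prod.ext_iff] <;> decide
    · rintro ⟨h1, h2, h3, h4, h5⟩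
      obtain ⟨x, y⟩ := p
      simp only [Prod.mk.injEq, ne_eq, not_and] at h5 ⊢
      interval_cases x <;> interval_cases y
      · exact ⟨0, t0⟩
      · exact ⟨3, t3⟩
      · exact ⟨6, t6⟩
      · exact ⟨5, t5⟩
      · simp at h5
      · exact ⟨1, t1⟩
      · exact ⟨2, t2⟩
      · exact ⟨7, t7⟩
      · exact ⟨4, t4⟩
  · intro i
    fin_cases i <;> unfold IsKnightDiff <;> decide
  · have key : ∀ a b c d : ℤ × ℤ, a ∉ ({c, d} : Set (ℤ × ℤ)) →
        ({a, b} : Set (ℤ × ℤ)) ≠ {c, d} := by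
      intro a b c d h heq
      exact h (heq ▸ Set.mem_insert a {b})
    intro i
    fin_cases i
    · exact ⟨5, key _ _ _ _ (by rw [show (5:ZMod 8)+1 = 6 from rfl, t5, t6]; decide), by decide⟩
    · exact ⟨4, key _ _ _ _ (by rw [show (4:ZMod 8)+1 = 5 from rfl, t4, t5]; decide), by decide⟩
    · exact ⟨7, key _ _ _ _ (by rw [show (7:ZMod 8)+1 = 0 from rfl, t7, t0]; decide), by decide⟩
    · exact ⟨6, key _ _ _ _ (by rw [show (6:ZMod 8)+1 = 7 from rfl, t6, t7]; decide), by decide⟩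
    · exact ⟨1, key _ _ _ _ (by rw [show (1:ZMod 8)+1 = 2 from rfl, t1, t2]; decide), by decide⟩
    · exact ⟨0, key _ _ _ _ (by rw [show (0:ZMod 8)+1 = 1 from rfl, t0, t1]; decide), by decide⟩
    · exact ⟨3, key _ _ _ _ (by rw [show (3:ZMod 8)+1 = 4 from rfl, t3, t4]; decide), by decide⟩
    · exact ⟨2, key _ _ _ _ (by rw [show (2:ZMod 8)+1 = 3 from rfl, t2, t3]; decide), by decide⟩
end

section
/- In a 2-regular knight graph G on the squares of a board, if a board edge e is red (its midpoint is the center of a cross of G), then each of the two squares adjacent to e along the crossing moves is an endpoint of exactly one of the two crossing knight moves; consequently, a square cannot be adjacent (in this sense) to three distinct red board edges, since that would force its degree in G to be at least 3. -/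
/-- Square `x` is adjacent to a red board edge with doubled midpoint `c`: some move of
`G` at `x` forms a central cross (with that common doubled midpoint) with another move. -/
def CrossAt (G : SimpleGraph (ℤ × ℤ)) (x c : ℤ × ℤ) : Prop :=
  ∃ q r s : ℤ × ℤ, G.Adj x q ∧ G.Adj r s ∧ ({x, q} : Set (ℤ × ℤ)) ≠ {r, s} ∧
    x + q = r + s ∧ x + q = c

/-- In a 2-regular knight graph, each square adjacent to a red board edge is an
endpoint of exactly one of the two crossing moves (the moves of a cross share no
endpoint); consequently no square is adjacent to three distinct red board edges. -/
theorem square_not_adjacent_to_three_red (G : SimpleGraph (ℤ × ℤ))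
    (hknight : ∀ p q, G.Adj p q → IsKnightDiff (p - q))
    (hdeg : ∀ p, (G.neighborSet p).ncard = 2) :
    (∀ p q r s, G.Adj p q → G.Adj r s → ({p, q} : Set (ℤ × ℤ)) ≠ {r, s} →
      p + q = r + s → p ≠ r ∧ p ≠ s) ∧
    (∀ x : ℤ × ℤ, ¬ ∃ c₁ c₂ c₃ : ℤ × ℤ, c₁ ≠ c₂ ∧ c₁ ≠ c₃ ∧ c₂ ≠ c₃ ∧
      CrossAt G x c₁ ∧ CrossAt G x c₂ ∧ CrossAt G x c₃) := by
  constructor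
  · intro p q r s hpq hrs hne hsum
    constructor
    · rintro rfl
      have hq : q = s := by
        have h1 := congrArg Prod.fst hsum
        have h2 := congrArg Prod.snd hsum
        simp at h1 h2
        exact Prod.ext (by omega) (by omega)
      subst hq
      exact hne rfl
    · rintro rfl
      have hq : q = r := by
        have h1 := congrArg Prod.fst hsum
        have h2 := congrArg Prod.snd hsum
        simp at h1 h2
        exact Prod.ext (by omega) (by omega)
      subst hq
      exact hne (Set.pair_comm _ _)
  · rintro x ⟨c₁, c₂, c₃, h12, h13, h23, ⟨q₁, _, _, ha1, _, _, _, hc1⟩,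
      ⟨q₂, _, _, ha2, _, _, _, hc2⟩, ⟨q₃, _, _, ha3, _, _, _, hc3⟩⟩
    have hne12 : q₁ ≠ q₂ := fun h => h12 (by rw [← hc1, ← hc2, h])
    have hne13 : q₁ ≠ q₃ := fun h => h13 (by rw [← hc1, ← hc3, h])
    have hne23 : q₂ ≠ q₃ := fun h => h23 (by rw [← hc2, ← hc3, h])
    have hsub : ({q₁, q₂, q₃} : Set (ℤ × ℤ)) ⊆ G.neighborSet x := by
      rintro y (rfl | rfl | rfl) <;> assumption
    have hfin : (G.neighborSet x).Finite := by
      by_contra h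
      have := Set.Infinite.ncard h
      rw [hdeg x] at this; exact two_ne_zero this
    have h3 : ({q₁, q₂, q₃} : Set (ℤ × ℤ)).ncard = 3 := by
      rw [Set.ncard_insert_of_notMem (by simp [hne12, hne13]),
        Set.ncard_insert_of_notMem (by simp [hne23]), Set.ncard_singleton]
    have := Set.ncard_le_ncard hsub hfin
    rw [h3, hdeg x] at this
    omega
end
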